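/- arXiv:1801.00028 — 7 statements merged into one kernel-verified Lean document; each statement's English description precedes it below -/
import Mathlib

section
/- Let σ be an automorphism of an abelian variety A fixing the origin with σ^r = 1, and suppose E_σ = im(1 - σ) has dimension 1 (i.e., σ is a pseudoreflection). Then σ restricts to an automorphism of the elliptic curve E_σ, and consequently r ∈ {2, 3, 4, 6}. -/
noncomputable section

abbrev Vn (n : ℕ) := Fin n → ℂ

/-- `Λ` is a lattice in `ℂ^n`: a discrete subgroup spanning `ℂ^n` over `ℝ`. -/
def IsLattice {n : ℕ} (Λ : AddSubgroup (Vn n)) : Prop :=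
  DiscreteTopology Λ ∧ Submodule.span ℝ (Λ : Set (Vn n)) = ⊤

/-!
Since `σ` commutes with `1 - σ`, it maps the line `E = im (1 - σ)` onto itself, hence acts on
it by a scalar `ζ`: `σ (1 - σ) = ζ (1 - σ)`. Then `σ ^ m = 1 - (1 + ζ + ⋯ + ζ ^ (m - 1)) (1 - σ)`,
so a `σ` of finite order has `ζ ≠ 1`, and `σ` and `ζ` have the same order. The lattice `Λ` meets
`E ≅ ℂ` in a lattice (it contains `(1 - σ) Λ`, which spans `E`) that is stable under
multiplication by `ζ`, so the trace `2 Re ζ` of this multiplication is an integer. For a root of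
unity this forces `ζ ^ 2 - 2 Re ζ · ζ + 1 = 0` with `|2 Re ζ| ≤ 2`, whence `ζ ^ 4 = 1` or
`ζ ^ 6 = 1`.
-/

section

open Module LinearMap Submodule

section GeomSum

variable {K A : Type*} [Field K] [Ring A] [Algebra K A] {f : A} {ζ : K}

theorem pow_eq_one_sub_geom_sum_smul (hζ : f * (1 - f) = ζ • (1 - f)) (m : ℕ) :
    f ^ m = 1 - (∑ i ∈ Finset.range m, ζ ^ i) • (1 - f) := by
  induction m with
  | zero => simp
  | succ m ih =>
    rw [pow_succ', ih, mul_sub, mul_one, mul_smul_comm, hζ, smul_smul, geom_sum_succ, mul_comm]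
    module

theorem pow_eq_one_iff_of_mul_one_sub_eq_smul (hζ : f * (1 - f) = ζ • (1 - f)) (hf : f ≠ 1)
    (hζ1 : ζ ≠ 1) (m : ℕ) : f ^ m = 1 ↔ ζ ^ m = 1 := by
  have hgeom : ζ ^ m = 1 ↔ ∑ i ∈ Finset.range m, ζ ^ i = 0 := by
    rw [← sub_eq_zero, ← geom_sum_mul, mul_eq_zero, sub_eq_zero, or_iff_left hζ1]
  rw [pow_eq_one_sub_geom_sum_smul hζ, sub_eq_self, smul_eq_zero, sub_eq_zero, hgeom,
    or_iff_left (Ne.symm hf)]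

theorem ne_one_of_mul_one_sub_eq_smul [CharZero K] (hζ : f * (1 - f) = ζ • (1 - f))
    (hf : f ≠ 1) (hfin : IsOfFinOrder f) : ζ ≠ 1 := by
  rintro rfl
  obtain ⟨m, hm, hfm⟩ := hfin.exists_pow_eq_one
  rw [pow_eq_one_sub_geom_sum_smul hζ, one_geom_sum, sub_eq_self, smul_eq_zero,
    sub_eq_zero] at hfm
  exact hfm.elim (Nat.cast_ne_zero.mpr hm.ne') (Ne.symm hf)

theorem orderOf_eq_orderOf_of_mul_one_sub_eq_smul [CharZero K]
    (hζ : f * (1 - f) = ζ • (1 - f)) (hf : f ≠ 1) (hfin : IsOfFinOrder f) :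
    orderOf f = orderOf ζ :=
  orderOf_eq_orderOf_iff.mpr <|
    pow_eq_one_iff_of_mul_one_sub_eq_smul hζ hf (ne_one_of_mul_one_sub_eq_smul hζ hf hfin)

end GeomSum

theorem Submodule.map_range_of_commute {R M : Type*} [CommSemiring R] [AddCommMonoid M]
    [Module R M] (f : M ≃ₗ[R] M) {T : Module.End R M} (h : Commute (f : Module.End R M) T) :
    (range T).map (f : Module.End R M) = range T := by
  rw [← range_comp, show (f : Module.End R M) ∘ₗ T = T ∘ₗ f from h.eq,
    range_comp_of_range_eq_top _ f.range]

theorem exists_mul_eq_smul_of_finrank_range_eq_one {K V : Type*} [Field K] [AddCommGroup V]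
    [Module K V] {g T : Module.End K V} (h : Commute g T) (hT : finrank K (range T) = 1) :
    ∃ ζ : K, g * T = ζ • T := by
  have hg : ∀ x ∈ range T, g x ∈ range T := by
    rintro _ ⟨y, rfl⟩
    exact ⟨g y, (LinearMap.congr_fun h y).symm⟩
  obtain ⟨ζ, hζ, -⟩ := (g.restrict hg).existsUnique_eq_smul_id_of_finrank_eq_one hT
  refine ⟨ζ, LinearMap.ext fun x => ?_⟩
  simpa using congrArg Subtype.val (LinearMap.congr_fun hζ ⟨T x, mem_range_self T x⟩)

theorem ZLattice.exists_trace_eq_intCast {E : Type*} [NormedAddCommGroup E] [NormedSpace ℝ E]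
    [FiniteDimensional ℝ E] (L : Submodule ℤ E) [DiscreteTopology L] [IsZLattice ℝ L]
    (g : E →ₗ[ℝ] E) (hg : ∀ x ∈ L, g x ∈ L) : ∃ m : ℤ, trace ℝ E g = m := by
  have := ZLattice.module_free ℝ L
  have := ZLattice.module_finite ℝ L
  let b := Module.Free.chooseBasis ℤ L
  let c := b.ofZLatticeBasis ℝ L
  have hgc : ∀ i, g (c i) ∈ L := fun i => by
    rw [b.ofZLatticeBasis_apply ℝ L]
    exact hg _ (b i).2
  refine ⟨∑ i, b.repr ⟨g (c i), hgc i⟩ i, ?_⟩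
  rw [trace_eq_matrix_trace ℝ c g, Matrix.trace, Int.cast_sum]
  refine Finset.sum_congr rfl fun i _ => ?_
  rw [Matrix.diag_apply, toMatrix_apply]
  simpa using b.ofZLatticeBasis_repr_apply ℝ L ⟨g (c i), hgc i⟩ i

theorem Submodule.span_preimage_eq_top_of_range_eq {R V W : Type*} [Semiring R]
    [AddCommMonoid V] [Module R V] [AddCommMonoid W] [Module R W] {S : Set V}
    (hS : span R S = ⊤) {T : V →ₗ[R] V} (hT : Set.MapsTo T S S) {ψ : W →ₗ[R] V}
    (hψ : Function.Injective ψ) (hrange : range ψ = range T) : span R (ψ ⁻¹' S) = ⊤ := by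
  apply map_injective_of_injective hψ
  rw [map_span, Set.image_preimage_eq_inter_range, map_top]
  refine le_antisymm ?_ ?_
  · rw [span_le, LinearMap.coe_range]
    exact Set.inter_subset_right
  rw [hrange, ← map_top, ← hS, map_span]
  refine span_mono (Set.subset_inter (Set.mapsTo_iff_image_subset.mp hT) ?_)
  rintro _ ⟨x, -, rfl⟩
  exact (hrange.symm ▸ mem_range_self T x : T x ∈ range ψ)

theorem exists_two_mul_re_eq_intCast_of_mapsTo_lattice {V : Type*} [NormedAddCommGroup V]
    [NormedSpace ℂ V] (Λ : AddSubgroup V) [DiscreteTopology Λ] (hΛ : span ℝ (Λ : Set V) = ⊤)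
    {f T : V →ₗ[ℂ] V} (hfΛ : Set.MapsTo f Λ Λ) (hTΛ : Set.MapsTo T Λ Λ)
    (hT : finrank ℂ (range T) = 1) {ζ : ℂ} (hζ : f * T = ζ • T) : ∃ t : ℤ, 2 * ζ.re = t := by
  obtain ⟨e, he, he0⟩ := exists_mem_ne_zero_of_ne_bot
    fun (h : range T = ⊥) => by rw [h, finrank_bot] at hT; exact zero_ne_one hT
  have hfe : f e = ζ • e := by
    obtain ⟨v, rfl⟩ := he
    exact LinearMap.congr_fun hζ v
  have := Module.finite_of_finrank_eq_succ hT
  have hspan : span ℂ {e} = range T :=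
    eq_of_le_of_finrank_eq (span_le.mpr (Set.singleton_subset_iff.mpr he))
      (by rw [finrank_span_singleton he0, hT])
  let ψ : ℂ →ₗ[ℝ] V := (toSpanSingleton ℂ V e).restrictScalars ℝ
  have hψinj : Function.Injective ψ := smul_left_injective ℂ he0
  let L : Submodule ℤ ℂ := ZLattice.comap ℝ Λ.toIntSubmodule ψ
  have : DiscreteTopology Λ.toIntSubmodule := ‹DiscreteTopology Λ›
  have : DiscreteTopology L := ZLattice.comap_discreteTopology ℝ _ (by fun_prop) hψinj
  have : IsZLattice ℝ L := by
    refine ⟨span_preimage_eq_top_of_range_eq hΛ (T := T.restrictScalars ℝ) hTΛ hψinj ?_⟩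
    rw [range_restrictScalars, range_restrictScalars, range_toSpanSingleton, hspan]
  obtain ⟨t, ht⟩ := ZLattice.exists_trace_eq_intCast L (Algebra.lmul ℝ ℂ ζ) fun z hz => by
    change (ζ * z) • e ∈ Λ
    rw [mul_comm, mul_smul, ← hfe, ← map_smul]
    exact hfΛ hz
  exact ⟨t, by rw [← ht, ← Algebra.trace_apply, Algebra.trace_complex_apply]⟩

theorem pow_four_eq_one_or_pow_six_eq_one {R : Type*} [CommRing R] [IsDomain R] {ζ : R}
    {t : ℤ} (ht : |t| ≤ 2) (h : ζ ^ 2 - t * ζ + 1 = 0) : ζ ^ 4 = 1 ∨ ζ ^ 6 = 1 := by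
  obtain ⟨hlo, hhi⟩ := abs_le.mp ht
  interval_cases t <;> push_cast at h
  · have : ζ + 1 = 0 := pow_eq_zero_iff two_ne_zero |>.mp (by linear_combination h)
    exact .inl (by linear_combination (ζ ^ 3 - ζ ^ 2 + ζ - 1) * this)
  · exact .inr (by linear_combination (ζ ^ 4 - ζ ^ 3 + ζ - 1) * h)
  · exact .inl (by linear_combination (ζ ^ 2 - 1) * h)
  · exact .inr (by linear_combination (ζ ^ 4 + ζ ^ 3 - ζ - 1) * h)
  · have : ζ - 1 = 0 := pow_eq_zero_iff two_ne_zero |>.mp (by linear_combination h)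
    exact .inl (by linear_combination (ζ ^ 3 + ζ ^ 2 + ζ + 1) * this)

theorem Complex.sq_sub_two_mul_re_mul_add_normSq (ζ : ℂ) :
    ζ ^ 2 - (2 * ζ.re : ℝ) * ζ + normSq ζ = 0 := by
  apply Complex.ext <;> simp [sq, normSq_apply] <;> ring

theorem Complex.orderOf_mem_of_two_mul_re_eq_intCast {ζ : ℂ} (hζ : ‖ζ‖ = 1) (hζ1 : ζ ≠ 1)
    {t : ℤ} (ht : 2 * ζ.re = t) : orderOf ζ ∈ ({2, 3, 4, 6} : Set ℕ) := by
  have htabs : |t| ≤ 2 := by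
    have : |(t : ℝ)| ≤ 2 := by
      rw [← ht, abs_mul, abs_two]
      linarith [abs_re_le_norm ζ]
    exact_mod_cast this
  have hquad : ζ ^ 2 - t * ζ + 1 = 0 := by
    simpa [normSq_eq_norm_sq, hζ, ht] using sq_sub_two_mul_re_mul_add_normSq ζ
  have h1 : orderOf ζ ≠ 1 := by rwa [Ne, orderOf_eq_one_iff]
  have hdvd : orderOf ζ ∣ 4 ∨ orderOf ζ ∣ 6 :=
    (pow_four_eq_one_or_pow_six_eq_one htabs hquad).imp orderOf_dvd_of_pow_eq_one
      orderOf_dvd_of_pow_eq_one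
  have hle : orderOf ζ ≤ 6 :=
    hdvd.elim (fun h => (Nat.le_of_dvd four_pos h).trans (by norm_num))
      (Nat.le_of_dvd (by norm_num))
  interval_cases orderOf ζ <;> simp_all

end

/-- Let `σ` be an automorphism of an abelian variety `A = ℂ^n ⧸ Λ` fixing the
origin, of exact order `r`, and suppose that `E_σ = im (1 - σ)` has dimension `1` (i.e. `σ`
is a pseudoreflection).  Then `σ` restricts to an automorphism of the elliptic curve `E_σ`
(on tangent spaces, `σ` maps the line `im (1 - σ)` onto itself), and consequently
`r ∈ {2, 3, 4, 6}`. -/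
theorem pseudoreflection_acts_on_Esigma {n r : ℕ} (hr : 0 < r)
    (Λ : AddSubgroup (Vn n)) (hΛ : IsLattice Λ)
    (f : Vn n ≃ₗ[ℂ] Vn n) (hfΛ : ∀ v, v ∈ Λ ↔ f v ∈ Λ)
    (hord : orderOf f = r)
    (hdim : Module.finrank ℂ
      (LinearMap.range ((1 : Vn n →ₗ[ℂ] Vn n) - (f : Vn n →ₗ[ℂ] Vn n))) = 1) :
    Submodule.map (f : Vn n →ₗ[ℂ] Vn n)
        (LinearMap.range ((1 : Vn n →ₗ[ℂ] Vn n) - (f : Vn n →ₗ[ℂ] Vn n))) =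
      LinearMap.range ((1 : Vn n →ₗ[ℂ] Vn n) - (f : Vn n →ₗ[ℂ] Vn n)) ∧
    r ∈ ({2, 3, 4, 6} : Set ℕ) := by
  set F : Module.End ℂ (Vn n) := (f : Vn n →ₗ[ℂ] Vn n)
  have hcomm : Commute F (1 - F) := (Commute.one_right F).sub_right (Commute.refl F)
  have hF1 : F ≠ 1 := by
    intro h
    rw [h, sub_self, LinearMap.range_zero, finrank_bot] at hdim
    exact zero_ne_one hdim
  obtain ⟨ζ, hζ⟩ := exists_mul_eq_smul_of_finrank_range_eq_one hcomm hdim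
  have hordF : orderOf F = r :=
    hord ▸ orderOf_injective LinearEquiv.automorphismGroup.toLinearMapMonoidHom
      LinearEquiv.toLinearMap_injective f
  have hfin : IsOfFinOrder F := orderOf_pos_iff.mp (hordF ▸ hr)
  have hordζ : orderOf ζ = r :=
    hordF ▸ (orderOf_eq_orderOf_of_mul_one_sub_eq_smul hζ hF1 hfin).symm
  have := hΛ.1
  obtain ⟨t, ht⟩ := exists_two_mul_re_eq_intCast_of_mapsTo_lattice Λ hΛ.2
    (fun v hv => (hfΛ v).mp hv) (fun v hv => Λ.sub_mem hv ((hfΛ v).mp hv)) hdim hζ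
  have hnorm : ‖ζ‖ = 1 :=
    Complex.norm_eq_one_of_pow_eq_one (hordζ ▸ pow_orderOf_eq_one ζ) hr.ne'
  exact ⟨Submodule.map_range_of_commute f hcomm,
    hordζ ▸ Complex.orderOf_mem_of_two_mul_re_eq_intCast hnorm
      (ne_one_of_mul_one_sub_eq_smul hζ hF1 hfin) ht⟩
end
end

section
/- Let G be a finite group acting on an abelian variety A by automorphisms fixing the origin, such that the quotient A/G is smooth and the Néron–Severi group of A/G tensored with ℚ is one-dimensional (Picard number 1). Then G leaves no non-trivial proper abelian subvariety of A invariant. -/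
/-!
Let `E` be a `G`-invariant polarization and `W` a `G`-stable complex subspace spanned by lattice
points. Positivity of `E` makes `ℂⁿ = W ⊕ W^⊥` (orthogonal for `E`), and the projection `p` onto
`W` commutes with `i` and with `G`. Since `W` and `E` are defined over `ℚ`, so is `p`; hence some
multiple `N • p` maps `Λ` into itself (it is the norm endomorphism of the abelian subvariety), and
`E (N • p ·) (N • p ·)` is a `G`-invariant Néron–Severi class. By Picard number one it is a
multiple of `E`; it is positive on `W` and vanishes on `W^⊥`, so one of them is `0`.
-/

noncomputable section

/-- A pseudoreflection: a linear automorphism whose fixed subspace is a hyperplane. -/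
def IsPseudoreflection {n : ℕ} (g : Vn n ≃ₗ[ℂ] Vn n) : Prop :=
  Module.finrank ℂ
    (LinearMap.range ((1 : Vn n →ₗ[ℂ] Vn n) - (g : Vn n →ₗ[ℂ] Vn n))) = 1

/-- The automorphism of `A = ℂ^n ⧸ Λ` induced by `g` fixes the point `x`. -/
def FixesPt {n : ℕ} (Λ : AddSubgroup (Vn n)) (g : Vn n ≃ₗ[ℂ] Vn n)
    (x : Vn n ⧸ Λ) : Prop :=
  ∃ v : Vn n, QuotientAddGroup.mk' Λ v = x ∧ g v - v ∈ Λ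

/-- Smoothness of the quotient `A/G` of the abelian variety `A = ℂ^n ⧸ Λ` by the finite
group `G`, encoded via the Chevalley–Shephard–Todd criterion: the stabilizer of every point
of `A` is generated by the pseudoreflections it contains. -/
def SmoothQuotient {n : ℕ} (Λ : AddSubgroup (Vn n))
    (G : Set (Vn n ≃ₗ[ℂ] Vn n)) : Prop :=
  ∀ x : Vn n ⧸ Λ, ∀ g ∈ G, FixesPt Λ g x →
    g ∈ Subgroup.closure {h : Vn n ≃ₗ[ℂ] Vn n | h ∈ G ∧ FixesPt Λ h x ∧ IsPseudoreflection h}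

/-- A real alternating form `E` on `ℂ^n` representing a Néron–Severi class of `ℂ^n ⧸ Λ`:
`E` is alternating, compatible with the complex structure, and integral on the lattice. -/
def IsNSClass {n : ℕ} (Λ : AddSubgroup (Vn n))
    (E : Vn n →ₗ[ℝ] Vn n →ₗ[ℝ] ℝ) : Prop :=
  (∀ x y : Vn n, E x y = - E y x) ∧
  (∀ x y : Vn n, E ((Complex.I : ℂ) • x) ((Complex.I : ℂ) • y) = E x y) ∧
  (∀ l ∈ Λ, ∀ m ∈ Λ, ∃ k : ℤ, E l m = (k : ℝ))

/-- `E` is invariant under the group `G`. -/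
def GInvariantForm {n : ℕ} (G : Subgroup (Vn n ≃ₗ[ℂ] Vn n))
    (E : Vn n →ₗ[ℝ] Vn n →ₗ[ℝ] ℝ) : Prop :=
  ∀ g ∈ G, ∀ x y : Vn n, E (g x) (g y) = E x y

open Submodule in
lemma LinearMap.BilinForm.mem_orthogonal_span {R M : Type*} [CommRing R] [AddCommGroup M]
    [Module R M] {B : LinearMap.BilinForm R M} {S : Set M} {x : M} :
    x ∈ B.orthogonal (span R S) ↔ ∀ s ∈ S, B s x = 0 :=
  ⟨fun h s hs => h s (subset_span hs), fun h _ hw => span_le (p := LinearMap.ker (B.flip x)).2 h hw⟩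

section RationalSpan

open Submodule LinearMap.BilinForm

variable {V : Type*} [AddCommGroup V] [Module ℚ V] {Λ : AddSubgroup V}

lemma exists_nsmul_mem_of_mem_span_rat {x : V} (hx : x ∈ span ℚ (Λ : Set V)) :
    ∃ N : ℕ, N ≠ 0 ∧ N • x ∈ Λ := by
  induction hx using Submodule.span_induction with
  | mem y hy => exact ⟨1, one_ne_zero, by simpa using hy⟩
  | zero => exact ⟨1, one_ne_zero, by simp⟩
  | add y z _ _ hy hz =>
    obtain ⟨N, hN, hNy⟩ := hy
    obtain ⟨M, hM, hMz⟩ := hz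
    refine ⟨N * M, mul_ne_zero hN hM, ?_⟩
    rw [smul_add, mul_nsmul, mul_nsmul']
    exact Λ.add_mem (Λ.nsmul_mem hNy M) (Λ.nsmul_mem hMz N)
  | smul q y _ hy =>
    obtain ⟨N, hN, hNy⟩ := hy
    refine ⟨q.den * N, mul_ne_zero q.den_nz hN, ?_⟩
    have : (q.den * N) • (q • y) = q.num • N • y := by
      rw [← Nat.cast_smul_eq_nsmul ℚ, ← Nat.cast_smul_eq_nsmul ℚ N, ← Int.cast_smul_eq_zsmul ℚ,
        smul_smul, smul_smul, Nat.cast_mul, mul_comm (q.den : ℚ), mul_assoc, Rat.den_mul_eq_num,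
        mul_comm]
    rw [this]
    exact Λ.zsmul_mem hNy _

lemma exists_nsmul_map_mem (hΛ : Λ.FG) (f : V →+ V) (hf : ∀ l ∈ Λ, f l ∈ span ℚ (Λ : Set V)) :
    ∃ N : ℕ, N ≠ 0 ∧ ∀ l ∈ Λ, N • f l ∈ Λ := by
  classical
  obtain ⟨s, hs⟩ := hΛ
  have hsΛ : ∀ g ∈ s, g ∈ Λ := fun g hg => hs ▸ AddSubgroup.subset_closure hg
  choose! M hM hMΛ using fun g hg => exists_nsmul_mem_of_mem_span_rat (hf g (hsΛ g hg))
  refine ⟨∏ g ∈ s, M g, Finset.prod_ne_zero_iff.2 hM, fun l hl => ?_⟩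
  refine (AddSubgroup.closure_le (Λ.comap ((∏ g ∈ s, M g) • f))).2 (fun g hg => ?_) (hs ▸ hl)
  obtain ⟨k, hk⟩ := Finset.dvd_prod_of_mem M hg
  change (∏ g ∈ s, M g) • f g ∈ Λ
  rw [hk, mul_nsmul]
  exact Λ.nsmul_mem (hMΛ g hg) k

lemma finiteDimensional_span_rat (hΛ : Λ.FG) : FiniteDimensional ℚ (span ℚ (Λ : Set V)) := by
  obtain ⟨s, rfl⟩ := hΛ
  have : span ℚ (AddSubgroup.closure (s : Set V) : Set V) = span ℚ s := by
    refine le_antisymm (span_le.2 ?_) (span_mono AddSubgroup.subset_closure)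
    exact AddSubgroup.closure_le (span ℚ (s : Set V)).toAddSubgroup |>.2 subset_span
  rw [this]
  infer_instance

variable [Module ℝ V]

lemma exists_ratCast_eq_of_mem_span_rat (E : V →ₗ[ℝ] V →ₗ[ℝ] ℝ)
    (hE : ∀ l ∈ Λ, ∀ m ∈ Λ, ∃ k : ℤ, E l m = k) {x y : V}
    (hx : x ∈ span ℚ (Λ : Set V)) (hy : y ∈ span ℚ (Λ : Set V)) : ∃ q : ℚ, E x y = q := by
  have key : map₂ (E.restrictScalars₁₂ ℚ ℚ) (span ℚ (Λ : Set V)) (span ℚ (Λ : Set V)) ≤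
      LinearMap.range (Algebra.linearMap ℚ ℝ) := by
    rw [map₂_span_span, span_le]
    rintro _ ⟨l, hl, m, hm, rfl⟩
    obtain ⟨k, hk⟩ := hE l hl m hm
    exact ⟨k, by simp [hk]⟩
  obtain ⟨q, hq⟩ := key (apply_mem_map₂ _ hx hy)
  exact ⟨q, hq.symm⟩

lemma projection_mem_span_rat (hΛ : Λ.FG) {E : LinearMap.BilinForm ℝ V} (hE : E.IsRefl)
    (hEΛ : ∀ l ∈ Λ, ∀ m ∈ Λ, ∃ k : ℤ, E l m = k) {W : Submodule ℝ V}
    (hW : span ℝ ((Λ : Set V) ∩ W) = W) (hWU : IsCompl W (E.orthogonal W)) {x : V}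
    (hx : x ∈ span ℚ (Λ : Set V)) : W.projection _ hWU x ∈ span ℚ (Λ : Set V) := by
  set P := span ℚ (Λ : Set V)
  have := finiteDimensional_span_rat hΛ
  -- `E` is `ℚ`-valued on `P`, so composing with a `ℚ`-linear retraction `ρ : ℝ → ℚ` gives a
  -- `ℚ`-valued form `B` on `P` with the same zeros as `E`.
  set ρ := (Algebra.linearMap ℚ ℝ).leftInverse
  have hρ (q : ℚ) : ρ q = q :=
    LinearMap.leftInverse_apply_of_inj (LinearMap.ker_eq_bot.2 (algebraMap ℚ ℝ).injective) q
  let B : LinearMap.BilinForm ℚ P :=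
    ((E.restrictScalars₁₂ ℚ ℚ).compl₁₂ P.subtype P.subtype).compr₂ ρ
  have hB (y z : P) : B y z = 0 ↔ E y z = 0 := by
    obtain ⟨q, hq⟩ := exists_ratCast_eq_of_mem_span_rat E hEΛ y.2 z.2
    simp [B, hq, hρ]
  let Wq : Submodule ℚ P := (W.restrictScalars ℚ).comap P.subtype
  have horth : ∀ z ∈ B.orthogonal Wq, (z : V) ∈ E.orthogonal W := by
    intro z hz
    rw [← hW, mem_orthogonal_span]
    rintro l ⟨hlΛ, hlW⟩
    exact (hB _ _).1 (hz ⟨l, subset_span hlΛ⟩ hlW)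
  have hBrefl : B.IsRefl := fun y z h => (hB _ _).2 (hE _ _ ((hB _ _).1 h))
  have hcompl : IsCompl Wq (B.orthogonal Wq) := by
    rw [isCompl_orthogonal_iff_disjoint hBrefl, Submodule.disjoint_def]
    intro y hyW hyU
    exact Subtype.ext (Submodule.disjoint_def.1 hWU.disjoint y hyW (horth y hyU))
  obtain ⟨y, hy, z, hz, hyz⟩ :=
    Submodule.mem_sup.1 (hcompl.sup_eq_top ▸ mem_top (x := (⟨x, hx⟩ : P)))
  rw [show x = y + z from congrArg Subtype.val hyz.symm, map_add,
    projection_apply_of_mem_left hWU (x := y) hy, projection_apply_of_mem_right hWU (horth z hz),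
    add_zero]
  exact y.2

end RationalSpan

section Projection

open Submodule LinearMap.BilinForm

variable {V : Type*} [AddCommGroup V] [Module ℝ V] {E : LinearMap.BilinForm ℝ V}

lemma orthogonal_mem_invtSubmodule {T : V →ₗ[ℝ] V} (hT : ∀ x y, E (T x) (T y) = E x y)
    {W : Submodule ℝ V} (hW : W ≤ W.map T) : E.orthogonal W ∈ Module.End.invtSubmodule T := by
  rw [Module.End.mem_invtSubmodule]
  intro u hu w hw
  obtain ⟨w', hw', rfl⟩ := hW hw
  rw [hT]
  exact hu w' hw'

lemma commute_projection_orthogonal {T : V →ₗ[ℝ] V} (hT : ∀ x y, E (T x) (T y) = E x y)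
    {W : Submodule ℝ V} (hW : W.map T = W) (hWU : IsCompl W (E.orthogonal W)) :
    Commute (W.projection _ hWU) T := by
  rw [LinearMap.IsIdempotentElem.commute_iff (isIdempotentElem_projection hWU), range_projection,
    ker_projection, Module.End.mem_invtSubmodule]
  exact ⟨Submodule.map_le_iff_le_comap.1 hW.le, orthogonal_mem_invtSubmodule hT hW.ge⟩

end Projection

section ComplexStructure

open Submodule LinearMap.BilinForm

variable {V : Type*} [AddCommGroup V] [Module ℝ V] [Module ℂ V] [IsScalarTower ℝ ℂ V]
  {E : LinearMap.BilinForm ℝ V} {W : Submodule ℂ V}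

lemma isCompl_orthogonal_of_pos [FiniteDimensional ℝ V] (hE : E.IsRefl)
    (hpos : ∀ x : V, x ≠ 0 → 0 < E (Complex.I • x) x) :
    IsCompl (W.restrictScalars ℝ) (E.orthogonal (W.restrictScalars ℝ)) := by
  rw [isCompl_orthogonal_iff_disjoint hE, Submodule.disjoint_def]
  intro x hxW hxU
  by_contra hx
  exact (hpos x hx).ne' (hxU _ (W.smul_mem Complex.I hxW))

variable (hWU : IsCompl (W.restrictScalars ℝ) (E.orthogonal (W.restrictScalars ℝ)))

lemma projection_map_of_map_eq {T : V →ₗ[ℂ] V} (hT : ∀ x y, E (T x) (T y) = E x y)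
    (hW : W.map T = W) (x : V) :
    (W.restrictScalars ℝ).projection _ hWU (T x) = T ((W.restrictScalars ℝ).projection _ hWU x) :=
  LinearMap.congr_fun (commute_projection_orthogonal (T := T.restrictScalars ℝ) hT
    (by rw [← restrictScalars_map, hW]) hWU).eq x

lemma projection_smul_I (hEI : ∀ x y, E (Complex.I • x) (Complex.I • y) = E x y) (x : V) :
    (W.restrictScalars ℝ).projection _ hWU (Complex.I • x) =
      Complex.I • (W.restrictScalars ℝ).projection _ hWU x := by
  have hT : W.map (Complex.I • LinearMap.id) = W := by
    rw [Submodule.map_smul _ _ _ Complex.I_ne_zero, map_id]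
  simpa using projection_map_of_map_eq hWU (fun x y => by simpa using hEI x y) hT x

lemma eq_top_of_pullback_projection_collinear (hpos : ∀ x : V, x ≠ 0 → 0 < E (Complex.I • x) x)
    (hW : W ≠ ⊥) {c : ℝ} (hc : c ≠ 0) {E₀ : LinearMap.BilinForm ℝ V} {q r : ℝ}
    (hq : E = q • E₀) (hr : E.compl₁₂ (c • (W.restrictScalars ℝ).projection _ hWU)
      (c • (W.restrictScalars ℝ).projection _ hWU) = r • E₀) : W = ⊤ := by
  set p := (W.restrictScalars ℝ).projection _ hWU
  have key (x : V) : q * (c * (c * E (p (Complex.I • x)) (p x))) = r * E (Complex.I • x) x := by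
    have hqr : q • E.compl₁₂ (c • p) (c • p) = r • E := by
      rw [hr, hq, smul_smul, smul_smul, mul_comm]
    simpa using LinearMap.congr_fun₂ hqr (Complex.I • x) x
  obtain ⟨w, hwW, hw0⟩ := W.ne_bot_iff.1 hW
  have hr0 : r ≠ 0 := by
    rintro rfl
    have hw := key w
    rw [projection_apply_of_mem_left hWU (W.smul_mem Complex.I hwW),
      projection_apply_of_mem_left hWU hwW] at hw
    have hq0 : q = 0 := by simpa [hc, (hpos w hw0).ne'] using hw
    simpa [hq, hq0] using hpos w hw0
  have hU : E.orthogonal (W.restrictScalars ℝ) = ⊥ := by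
    refine eq_bot_iff.2 fun u hu => ?_
    by_contra hu0
    have hu' := key u
    rw [projection_apply_of_mem_right hWU hu] at hu'
    simp only [map_zero, mul_zero, zero_eq_mul, hr0, false_or] at hu'
    exact (hpos u hu0).ne' hu'
  simpa [hU] using hWU.sup_eq_top

end ComplexStructure

section NeronSeveri

variable {n : ℕ} {Λ : AddSubgroup (Vn n)} {E : Vn n →ₗ[ℝ] Vn n →ₗ[ℝ] ℝ}

lemma IsLattice.fg (hΛ : IsLattice Λ) : Λ.FG := by
  have : DiscreteTopology (AddSubgroup.toIntSubmodule Λ) := hΛ.1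
  rw [← AddSubgroup.toIntSubmodule_toAddSubgroup Λ, ← Submodule.fg_iff_addSubgroup_fg,
    ← Module.Finite.iff_fg]
  infer_instance

lemma IsNSClass.isRefl (hE : IsNSClass Λ E) : E.IsRefl :=
  fun x y h => by rw [hE.1, h, neg_zero]

lemma IsNSClass.compl₁₂ (hE : IsNSClass Λ E) {φ : Vn n →ₗ[ℝ] Vn n}
    (hφI : ∀ x, φ (Complex.I • x) = Complex.I • φ x) (hφΛ : ∀ l ∈ Λ, φ l ∈ Λ) :
    IsNSClass Λ (E.compl₁₂ φ φ) :=
  ⟨fun _ _ => hE.1 _ _, fun x y => by simp [hφI, hE.2.1],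
    fun l hl m hm => hE.2.2 _ (hφΛ l hl) _ (hφΛ m hm)⟩

lemma GInvariantForm.compl₁₂ {G : Subgroup (Vn n ≃ₗ[ℂ] Vn n)} (hE : GInvariantForm G E)
    {φ : Vn n →ₗ[ℝ] Vn n} (hφ : ∀ g ∈ G, ∀ x, φ (g x) = g (φ x)) :
    GInvariantForm G (E.compl₁₂ φ φ) :=
  fun g hg x y => by simp [hφ g hg, hE g hg]

end NeronSeveri

theorem no_invariant_abelian_subvariety_general {n : ℕ}
    (Λ : AddSubgroup (Vn n)) (hΛ : IsLattice Λ)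
    (G : Subgroup (Vn n ≃ₗ[ℂ] Vn n))
    (hpol : ∃ E : Vn n →ₗ[ℝ] Vn n →ₗ[ℝ] ℝ, IsNSClass Λ E ∧ GInvariantForm G E ∧
      ∀ x : Vn n, x ≠ 0 → 0 < E ((Complex.I : ℂ) • x) x)
    (hpic : ∃ E₀ : Vn n →ₗ[ℝ] Vn n →ₗ[ℝ] ℝ, IsNSClass Λ E₀ ∧ GInvariantForm G E₀ ∧ E₀ ≠ 0 ∧
      ∀ E : Vn n →ₗ[ℝ] Vn n →ₗ[ℝ] ℝ, IsNSClass Λ E → GInvariantForm G E →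
        ∃ q : ℚ, E = (q : ℝ) • E₀) :
    ∀ W : Submodule ℂ (Vn n),
      Submodule.span ℝ ((Λ : Set (Vn n)) ∩ (W : Set (Vn n))) = W.restrictScalars ℝ →
      (∀ g ∈ G, W.map (g : Vn n →ₗ[ℂ] Vn n) = W) →
      W = ⊥ ∨ W = ⊤ := by
  intro W hWspan hWG
  obtain ⟨E, hE, hEG, hEpos⟩ := hpol
  obtain ⟨E₀, -, -, -, hE₀⟩ := hpic
  have hWU := isCompl_orthogonal_of_pos (W := W) hE.isRefl hEpos
  set p := (W.restrictScalars ℝ).projection _ hWU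
  obtain ⟨N, hN, hNΛ⟩ := exists_nsmul_map_mem hΛ.fg p.toAddMonoidHom fun l hl =>
    projection_mem_span_rat hΛ.fg hE.isRefl hE.2.2 (W := W.restrictScalars ℝ) hWspan hWU
      (Submodule.subset_span hl)
  have hF : IsNSClass Λ (E.compl₁₂ (N • p) (N • p)) :=
    hE.compl₁₂ (fun x => by
      rw [LinearMap.smul_apply, LinearMap.smul_apply, projection_smul_I hWU hE.2.1, smul_comm]) hNΛ
  have hFG : GInvariantForm G (E.compl₁₂ (N • p) (N • p)) := hEG.compl₁₂ fun g hg x => by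
    rw [LinearMap.smul_apply, LinearMap.smul_apply, map_nsmul]
    exact congrArg (N • ·) (projection_map_of_map_eq hWU (hEG g hg) (hWG g hg) x)
  obtain ⟨q, hq⟩ := hE₀ E hE hEG
  obtain ⟨r, hr⟩ := hE₀ _ hF hFG
  rw [← Nat.cast_smul_eq_nsmul ℝ] at hr
  rcases eq_or_ne W ⊥ with hW | hW
  · exact .inl hW
  · exact .inr (eq_top_of_pullback_projection_collinear hWU hEpos hW (Nat.cast_ne_zero.2 hN) hq hr)

/-- Let `G` be a finite group acting on an abelian variety `A = ℂ^n ⧸ Λ` by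
automorphisms fixing the origin, such that `A/G` is smooth and `NS(A/G) ⊗ ℚ ≅ ℚ`
(Picard number 1); here `NS(A/G) ⊗ ℚ` is identified with the space of `G`-invariant rational
Néron–Severi classes of `A`.  Then `G` leaves no non-trivial proper abelian subvariety of `A`
invariant: every `G`-stable abelian subvariety (given by a `G`-stable complex subspace `W`
meeting `Λ` in a lattice of `W`) is `0` or `A`. -/
theorem no_invariant_abelian_subvariety {n : ℕ}
    (Λ : AddSubgroup (Vn n)) (hΛ : IsLattice Λ)
    (G : Subgroup (Vn n ≃ₗ[ℂ] Vn n)) (hGfin : Finite G)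
    (hGΛ : ∀ g ∈ G, ∀ v ∈ Λ, g v ∈ Λ)
    (hpol : ∃ E : Vn n →ₗ[ℝ] Vn n →ₗ[ℝ] ℝ, IsNSClass Λ E ∧ GInvariantForm G E ∧
      ∀ x : Vn n, x ≠ 0 → 0 < E ((Complex.I : ℂ) • x) x)
    (hsmooth : SmoothQuotient Λ (G : Set (Vn n ≃ₗ[ℂ] Vn n)))
    (hpic : ∃ E₀ : Vn n →ₗ[ℝ] Vn n →ₗ[ℝ] ℝ, IsNSClass Λ E₀ ∧ GInvariantForm G E₀ ∧ E₀ ≠ 0 ∧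
      ∀ E : Vn n →ₗ[ℝ] Vn n →ₗ[ℝ] ℝ, IsNSClass Λ E → GInvariantForm G E →
        ∃ q : ℚ, E = (q : ℝ) • E₀) :
    ∀ W : Submodule ℂ (Vn n),
      Submodule.span ℝ ((Λ : Set (Vn n)) ∩ (W : Set (Vn n))) = W.restrictScalars ℝ →
      (∀ g ∈ G, W.map (g : Vn n →ₗ[ℂ] Vn n) = W) →
      W = ⊥ ∨ W = ⊤ :=
  no_invariant_abelian_subvariety_general Λ hΛ G hpol hpic
end
end

section
/- Let G act on an abelian variety A by automorphisms fixing the origin, let A_0 be the connected component of A^G containing 0, and let P be the complementary abelian subvariety of A_0 with respect to a G-invariant polarization. Then A/G is smooth if and only if P/G is smooth; moreover A/G fibers over the abelian variety A_0/(A_0 ∩ P) with all fibers isomorphic to P/G. -/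
noncomputable section

/-- The Chevalley–Shephard–Todd smoothness condition at the point `x`: the stabilizer of
`x` in `G` is generated by the pseudoreflections it contains. -/
def CSTAt {n : ℕ} (Λ : AddSubgroup (Vn n)) (G : Set (Vn n ≃ₗ[ℂ] Vn n))
    (x : Vn n ⧸ Λ) : Prop :=
  ∀ g ∈ G, FixesPt Λ g x →
    g ∈ Subgroup.closure {h : Vn n ≃ₗ[ℂ] Vn n | h ∈ G ∧ FixesPt Λ h x ∧ IsPseudoreflection h}

/-!
Write `A = Vn n ⧸ Λ` and `Vn n = W0 ⊕ WP`. As `G` fixes `W0` pointwise,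
`g (u + w) - (u + w) = g w - w` for `u ∈ W0`, so `mk (u + w)` and `mk w ∈ P` are fixed by the
same elements of `G`; hence the Chevalley–Shephard–Todd condition holds on `A` iff it holds on `P`.
Projecting onto `W0` along `WP` gives a `G`-invariant homomorphism `A → A₀ ⧸ (A₀ ∩ P)` with
kernel `P`. Its fibre over the image of `a ∈ A₀` is `a + P`, and since `a` is `G`-fixed,
`y ↦ a + y` induces a continuous bijection from the compact space `P/G` onto the fibre in
`A/G`, which is Hausdorff because `G` is finite; so it is a homeomorphism.
-/

theorem QuotientAddGroup.isCompact_image_span_of_subset {E : Type*} [AddCommGroup E] [Module ℝ E]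
    [TopologicalSpace E] [IsTopologicalAddGroup E] [ContinuousSMul ℝ E] [FiniteDimensional ℝ E]
    {Λ : AddSubgroup E} {S : Set E} (hS : S ⊆ Λ) :
    IsCompact (mk' Λ '' (Submodule.span ℝ S : Set E)) := by
  obtain ⟨b, hbS, hspan, hli⟩ := exists_linearIndependent ℝ S
  have : Fintype b := hli.setFinite.fintype
  set f := Fintype.linearCombination ℝ ((↑) : b → E)
  have hf : Continuous f := by fun_prop
  have hrange : Set.range f = Submodule.span ℝ S := by
    rw [← LinearMap.coe_range, Fintype.range_linearCombination, Subtype.range_coe, hspan]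
  -- a combination and that of its fractional parts differ by a `ℤ`-combination of `b ⊆ Λ`
  have hfract : ∀ c, mk' Λ (f (Int.fract ∘ c)) = mk' Λ (f c) := by
    intro c
    rw [mk'_apply, mk'_apply, QuotientAddGroup.eq, ← map_neg, ← map_add,
      Fintype.linearCombination_apply]
    refine AddSubgroup.sum_mem _ fun i _ => ?_
    have : (-(Int.fract ∘ c) + c) i = ((⌊c i⌋ : ℤ) : ℝ) := by
      rw [← Int.self_sub_fract]; simp only [Pi.add_apply, Pi.neg_apply, Function.comp_apply]; ring
    rw [this, Int.cast_smul_eq_zsmul]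
    exact AddSubgroup.zsmul_mem _ (hS (hbS i.2)) _
  have himage : mk' Λ '' (Submodule.span ℝ S : Set E) = (mk' Λ ∘ f) '' Set.Icc 0 1 := by
    rw [← hrange, ← Set.range_comp]
    refine (Set.image_subset_range _ _).antisymm' ?_
    rintro _ ⟨c, rfl⟩
    exact ⟨Int.fract ∘ c, ⟨fun i => Int.fract_nonneg _, fun i => (Int.fract_lt_one _).le⟩, hfract c⟩
  rw [himage]
  exact isCompact_Icc.image (continuous_quotient_mk'.comp hf)

theorem Submodule.projection_apply_eq_of_fixes_of_mapsTo {R E : Type*} [Ring R] [AddCommGroup E]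
    [Module R E] {p q : Submodule R E} (hpq : IsCompl p q) {g : E →ₗ[R] E}
    (hp : ∀ v ∈ p, g v = v) (hq : ∀ v ∈ q, g v ∈ q) (v : E) :
    p.projection q hpq (g v) = p.projection q hpq v := by
  have hv₁ := projection_apply_mem hpq v
  have hv₂ := projection_apply_mem hpq.symm v
  nth_rewrite 1 [← projection_add_projection_eq_self hpq v]
  rw [map_add, hp _ hv₁, map_add, projection_apply_of_mem_left hpq hv₁,
    projection_apply_of_mem_right hpq (hq _ hv₂), add_zero]

theorem AddMonoidHom.eq_iff_exists_add_of_ker_eq {A B : Type*} [AddGroup A] [AddGroup B]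
    {f : A →+ B} {K : AddSubgroup A} (hK : f.ker = K) (a x : A) :
    f x = f a ↔ ∃ y ∈ K, a + y = x := by
  subst hK
  refine ⟨fun h => ⟨-a + x, ?_, add_neg_cancel_left a x⟩, ?_⟩
  · rw [AddMonoidHom.mem_ker, map_add, map_neg, h, neg_add_cancel]
  · rintro ⟨y, hy, rfl⟩
    rw [map_add, AddMonoidHom.mem_ker.1 hy, add_zero]

section OrbitRelation

variable {Γ X : Type*} [Group Γ] [MulAction Γ X] {r : X → X → Prop}

theorem eq_orbitRel_of_iff_exists_smul (hr : ∀ x y, r x y ↔ ∃ γ : Γ, γ • x = y) :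
    r = (MulAction.orbitRel Γ X).r := by
  ext x y
  rw [hr, ← MulAction.mem_orbit_iff, MulAction.mem_orbit_symm]
  rfl

theorem equivalence_of_iff_exists_smul (hr : ∀ x y, r x y ↔ ∃ γ : Γ, γ • x = y) :
    Equivalence r :=
  eq_orbitRel_of_iff_exists_smul hr ▸ (MulAction.orbitRel Γ X).iseqv

theorem t2Space_quot_of_iff_exists_smul [TopologicalSpace X] [Finite Γ] [ContinuousConstSMul Γ X]
    [T2Space X] [LocallyCompactSpace X] (hr : ∀ x y, r x y ↔ ∃ γ : Γ, γ • x = y) :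
    T2Space (Quot r) := by
  obtain rfl := eq_orbitRel_of_iff_exists_smul hr
  exact t2Space_of_properlyDiscontinuousSMul_of_t2Space

end OrbitRelation

theorem Quot.nonempty_homeomorph_preimage_lift {α β γ : Type*} [TopologicalSpace α]
    [TopologicalSpace β] [CompactSpace β] {r : α → α → Prop} {s : β → β → Prop} [T2Space (Quot r)]
    {f : α → γ} (hf : ∀ x y, r x y → f x = f y) {b : γ} {φ : β → α} (hφ : Continuous φ)
    (hφ_mem : ∀ y, f (φ y) = b) (hφ_surj : ∀ x, f x = b → ∃ y, φ y = x)
    (hφ_rel : ∀ y y', Quot.mk r (φ y) = Quot.mk r (φ y') ↔ Quot.mk s y = Quot.mk s y') :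
    Nonempty (Quot.lift f hf ⁻¹' {b} ≃ₜ Quot s) := by
  let Φ : Quot s → Quot.lift f hf ⁻¹' {b} :=
    Quot.lift (fun y => ⟨Quot.mk r (φ y), hφ_mem y⟩)
      fun y y' h => Subtype.ext ((hφ_rel y y').2 (Quot.sound h))
  have hinj : Φ.Injective := by
    rintro ⟨y⟩ ⟨y'⟩ h
    exact (hφ_rel y y').1 (congrArg Subtype.val h)
  have hsurj : Φ.Surjective := by
    rintro ⟨⟨x⟩, hx⟩
    obtain ⟨y, rfl⟩ := hφ_surj x hx
    exact ⟨Quot.mk s y, rfl⟩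
  have hcont : Continuous Φ :=
    continuous_quot_lift _ ((continuous_quot_mk.comp hφ).subtype_mk _)
  exact ⟨(hcont.homeoOfEquivCompactToT2 (f := Equiv.ofBijective Φ ⟨hinj, hsurj⟩)).symm⟩

section Torus

open QuotientAddGroup (mk' mk'_apply mk'_surjective)

variable {n : ℕ} {Λ : AddSubgroup (Vn n)}

variable (Λ) in
def torusImage (W : Submodule ℂ (Vn n)) : AddSubgroup (Vn n ⧸ Λ) :=
  W.toAddSubgroup.map (mk' Λ)

theorem mk_mem_torusImage {W : Submodule ℂ (Vn n)} {v : Vn n} (hv : v ∈ W) :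
    mk' Λ v ∈ torusImage Λ W :=
  ⟨v, hv, rfl⟩

theorem isCompact_torusImage {W : Submodule ℂ (Vn n)}
    (hW : Submodule.span ℝ ((Λ : Set (Vn n)) ∩ W) = W.restrictScalars ℝ) :
    IsCompact (torusImage Λ W : Set (Vn n ⧸ Λ)) := by
  have := QuotientAddGroup.isCompact_image_span_of_subset (Λ := Λ)
    (S := (Λ : Set (Vn n)) ∩ W) Set.inter_subset_left
  rwa [hW] at this

theorem fixesPt_mk_iff {g : Vn n ≃ₗ[ℂ] Vn n} (hg : ∀ v ∈ Λ, g v ∈ Λ) (v : Vn n) :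
    FixesPt Λ g (mk' Λ v) ↔ g v - v ∈ Λ := by
  refine ⟨?_, fun h => ⟨v, rfl, h⟩⟩
  rintro ⟨w, hw, hgw⟩
  have hwv : w - v ∈ Λ := (QuotientAddGroup.eq_iff_sub_mem).1 hw
  have : g v - v = (g w - w) - (g (w - v) - (w - v)) := by rw [map_sub]; abel
  rw [this]
  exact sub_mem hgw (sub_mem (hg _ hwv) hwv)

theorem fixesPt_mk_add_iff {g : Vn n ≃ₗ[ℂ] Vn n} (hg : ∀ v ∈ Λ, g v ∈ Λ) {u : Vn n} (hu : g u = u)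
    (w : Vn n) :
    FixesPt Λ g (mk' Λ (u + w)) ↔ FixesPt Λ g (mk' Λ w) := by
  rw [fixesPt_mk_iff hg, fixesPt_mk_iff hg, map_add, hu, add_sub_add_left_eq_sub]

theorem cstAt_congr {G : Set (Vn n ≃ₗ[ℂ] Vn n)} {x y : Vn n ⧸ Λ}
    (h : ∀ g ∈ G, FixesPt Λ g x ↔ FixesPt Λ g y) : CSTAt Λ G x ↔ CSTAt Λ G y := by
  have hgen : {g | g ∈ G ∧ FixesPt Λ g x ∧ IsPseudoreflection g} =
      {g | g ∈ G ∧ FixesPt Λ g y ∧ IsPseudoreflection g} := by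
    ext g
    exact and_congr_right fun hg => and_congr_left fun _ => h g hg
  unfold CSTAt
  rw [hgen]
  exact forall₂_congr fun g hg => imp_congr (h g hg) Iff.rfl

theorem forall_cstAt_iff_forall_mem_torusImage {G : Set (Vn n ≃ₗ[ℂ] Vn n)}
    {W0 WP : Submodule ℂ (Vn n)} (hGΛ : ∀ g ∈ G, ∀ v ∈ Λ, g v ∈ Λ)
    (hfix : ∀ g ∈ G, ∀ v ∈ W0, g v = v) (hsup : W0 ⊔ WP = ⊤) :
    (∀ x, CSTAt Λ G x) ↔ ∀ x ∈ torusImage Λ WP, CSTAt Λ G x := by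
  refine ⟨fun h x _ => h x, fun h x => ?_⟩
  obtain ⟨v, rfl⟩ := mk'_surjective Λ x
  obtain ⟨u, hu, w, hw, rfl⟩ := Submodule.mem_sup.1 (hsup ▸ Submodule.mem_top : v ∈ W0 ⊔ WP)
  rw [cstAt_congr fun g hg => fixesPt_mk_add_iff (hGΛ g hg) (hfix g hg u hu) w]
  exact h _ (mk_mem_torusImage hw)

variable {G : Subgroup (Vn n ≃ₗ[ℂ] Vn n)}

variable (Λ G) in
def torusOrbitRel (x y : Vn n ⧸ Λ) : Prop :=
  ∃ g ∈ G, ∃ v : Vn n, mk' Λ v = x ∧ mk' Λ (g v) = y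

abbrev torusAction (hGΛ : ∀ g ∈ G, ∀ v ∈ Λ, g v ∈ Λ) : DistribMulAction G (Vn n ⧸ Λ) where
  smul g := QuotientAddGroup.map Λ Λ (g : Vn n ≃ₗ[ℂ] Vn n).toLinearMap.toAddMonoidHom (hGΛ g g.2)
  one_smul x := QuotientAddGroup.induction_on x fun _ => rfl
  mul_smul _ _ x := QuotientAddGroup.induction_on x fun _ => rfl
  smul_zero _ := map_zero _
  smul_add _ := map_add _

theorem torusAction_smul_mk (hGΛ : ∀ g ∈ G, ∀ v ∈ Λ, g v ∈ Λ) (g : G) (v : Vn n) :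
    let := torusAction hGΛ
    g • mk' Λ v = mk' Λ ((g : Vn n ≃ₗ[ℂ] Vn n) v) :=
  rfl

theorem torusOrbitRel_iff_exists_smul (hGΛ : ∀ g ∈ G, ∀ v ∈ Λ, g v ∈ Λ) (x y : Vn n ⧸ Λ) :
    let := torusAction hGΛ
    torusOrbitRel Λ G x y ↔ ∃ g : G, g • x = y := by
  let := torusAction hGΛ
  constructor
  · rintro ⟨g, hg, v, rfl, rfl⟩
    exact ⟨⟨g, hg⟩, torusAction_smul_mk hGΛ _ v⟩
  · rintro ⟨g, rfl⟩
    obtain ⟨v, rfl⟩ := mk'_surjective Λ x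
    exact ⟨g, g.2, v, rfl, (torusAction_smul_mk hGΛ g v).symm⟩

theorem equivalence_torusOrbitRel (hGΛ : ∀ g ∈ G, ∀ v ∈ Λ, g v ∈ Λ) :
    Equivalence (torusOrbitRel Λ G) :=
  let := torusAction hGΛ
  equivalence_of_iff_exists_smul (torusOrbitRel_iff_exists_smul hGΛ)

theorem t2Space_quot_torusOrbitRel [IsClosed (Λ : Set (Vn n))] [Finite G]
    (hGΛ : ∀ g ∈ G, ∀ v ∈ Λ, g v ∈ Λ) :
    T2Space (Quot (torusOrbitRel Λ G)) := by
  let := torusAction hGΛ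
  have : ContinuousConstSMul G (Vn n ⧸ Λ) := ⟨fun g =>
    (QuotientAddGroup.isQuotientMap_mk Λ).continuous_iff.2 <|
      continuous_quot_mk.comp (g : Vn n ≃ₗ[ℂ] Vn n).toLinearMap.continuous_of_finiteDimensional⟩
  exact t2Space_quot_of_iff_exists_smul (torusOrbitRel_iff_exists_smul hGΛ)

theorem torusOrbitRel_mk_add_iff (hGΛ : ∀ g ∈ G, ∀ v ∈ Λ, g v ∈ Λ) {v₀ : Vn n}
    (hv₀ : ∀ g ∈ G, g v₀ = v₀) (y y' : Vn n ⧸ Λ) :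
    torusOrbitRel Λ G (mk' Λ v₀ + y) (mk' Λ v₀ + y') ↔ torusOrbitRel Λ G y y' := by
  let := torusAction hGΛ
  simp only [torusOrbitRel_iff_exists_smul hGΛ, smul_add, torusAction_smul_mk,
    hv₀ _ (Subtype.prop _), add_right_inj]

end Torus

section BaseMap

open QuotientAddGroup (mk' mk'_apply mk'_surjective)

variable {n : ℕ} {Λ : AddSubgroup (Vn n)} {W0 WP : Submodule ℂ (Vn n)}

variable (Λ W0 WP) in
abbrev torusBase : Type :=
  torusImage Λ W0 ⧸ (torusImage Λ W0 ⊓ torusImage Λ WP).addSubgroupOf (torusImage Λ W0)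

variable (Λ) in
def projToBase (hcompl : IsCompl W0 WP) : Vn n →+ torusBase Λ W0 WP :=
  (mk' _).comp (((mk' Λ).comp (W0.projection WP hcompl).toAddMonoidHom).codRestrict _
    fun v => mk_mem_torusImage (Submodule.projection_apply_mem hcompl v))

theorem projToBase_apply (hcompl : IsCompl W0 WP) (v : Vn n) :
    projToBase Λ hcompl v = mk' _
      ⟨mk' Λ (W0.projection WP hcompl v),
        mk_mem_torusImage (Submodule.projection_apply_mem hcompl v)⟩ :=
  rfl

theorem projToBase_eq_zero_iff (hcompl : IsCompl W0 WP) (v : Vn n) :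
    projToBase Λ hcompl v = 0 ↔ mk' Λ v ∈ torusImage Λ WP := by
  have hv : mk' Λ v = mk' Λ (W0.projection WP hcompl v) +
      mk' Λ (WP.projection W0 hcompl.symm v) := by
    rw [← map_add, Submodule.projection_add_projection_eq_self]
  rw [projToBase_apply, mk'_apply, QuotientAddGroup.eq_zero_iff,
    AddSubgroup.mem_addSubgroupOf, AddSubgroup.mem_inf,
    and_iff_right (mk_mem_torusImage (Submodule.projection_apply_mem hcompl v)), hv]
  exact ((torusImage Λ WP).add_mem_cancel_right
    (mk_mem_torusImage (Submodule.projection_apply_mem hcompl.symm v))).symm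

variable (Λ) in
def baseMap (hcompl : IsCompl W0 WP) : Vn n ⧸ Λ →+ torusBase Λ W0 WP :=
  QuotientAddGroup.lift Λ (projToBase Λ hcompl) fun l hl => by
    rw [AddMonoidHom.mem_ker, projToBase_eq_zero_iff, mk'_apply,
      (QuotientAddGroup.eq_zero_iff l).2 hl]
    exact zero_mem _

theorem baseMap_mk (hcompl : IsCompl W0 WP) (v : Vn n) :
    baseMap Λ hcompl (mk' Λ v) = projToBase Λ hcompl v :=
  rfl

theorem ker_baseMap (hcompl : IsCompl W0 WP) : (baseMap Λ hcompl).ker = torusImage Λ WP := by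
  ext x
  induction x using QuotientAddGroup.induction_on with
  | H v => exact projToBase_eq_zero_iff hcompl v

theorem exists_mem_baseMap_mk_eq (hcompl : IsCompl W0 WP) (b : torusBase Λ W0 WP) :
    ∃ v ∈ W0, baseMap Λ hcompl (mk' Λ v) = b := by
  obtain ⟨⟨_, v, hv, rfl⟩, rfl⟩ := mk'_surjective _ b
  refine ⟨v, hv, ?_⟩
  rw [baseMap_mk, projToBase_apply]
  congr 1
  exact Subtype.ext (congrArg (mk' Λ) (Submodule.projection_apply_of_mem_left hcompl hv))

theorem continuous_baseMap (hcompl : IsCompl W0 WP) : Continuous (baseMap Λ hcompl) :=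
  (QuotientAddGroup.isQuotientMap_mk Λ).continuous_iff.2 <| continuous_quot_mk.comp <|
    (continuous_quot_mk.comp
      (W0.projection WP hcompl).continuous_of_finiteDimensional).subtype_mk _

theorem baseMap_eq_of_torusOrbitRel (hcompl : IsCompl W0 WP) {G : Subgroup (Vn n ≃ₗ[ℂ] Vn n)}
    (hfix : ∀ g ∈ G, ∀ v ∈ W0, g v = v) (hstable : ∀ g ∈ G, ∀ v ∈ WP, g v ∈ WP)
    {x y : Vn n ⧸ Λ} (h : torusOrbitRel Λ G x y) : baseMap Λ hcompl x = baseMap Λ hcompl y := by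
  obtain ⟨g, hg, v, rfl, rfl⟩ := h
  rw [baseMap_mk, baseMap_mk, projToBase_apply, projToBase_apply]
  congr 1
  exact Subtype.ext <| congrArg (mk' Λ) <| .symm <|
    Submodule.projection_apply_eq_of_fixes_of_mapsTo hcompl (g := (g : Vn n →ₗ[ℂ] Vn n))
      (hfix g hg) (hstable g hg) v

end BaseMap

theorem smooth_iff_prym_smooth_and_fibration_general {n : ℕ}
    (Λ : AddSubgroup (Vn n)) (hΛ : IsLattice Λ)
    (G : Subgroup (Vn n ≃ₗ[ℂ] Vn n)) (hGfin : Finite G)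
    (hGΛ : ∀ g ∈ G, ∀ v ∈ Λ, g v ∈ Λ)
    (W0 WP : Submodule ℂ (Vn n))
    (hW0 : ∀ v : Vn n, v ∈ W0 ↔ ∀ g ∈ G, g v = v)
    (hcompl1 : W0 ⊓ WP = ⊥) (hcompl2 : W0 ⊔ WP = ⊤)
    (hPstable : ∀ g ∈ G, WP.map (g : Vn n →ₗ[ℂ] Vn n) = WP)
    (hWPlat : Submodule.span ℝ ((Λ : Set (Vn n)) ∩ (WP : Set (Vn n))) =
      WP.restrictScalars ℝ) :
    -- `A₀` and `P` as subgroups of `A`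
    let A0 : AddSubgroup (Vn n ⧸ Λ) :=
      W0.toAddSubgroup.map (QuotientAddGroup.mk' Λ)
    let P : AddSubgroup (Vn n ⧸ Λ) :=
      WP.toAddSubgroup.map (QuotientAddGroup.mk' Λ)
    -- the orbit relation of `G` on `A` and on `P`
    let RG : (Vn n ⧸ Λ) → (Vn n ⧸ Λ) → Prop := fun x y =>
      ∃ g ∈ G, ∃ v : Vn n, QuotientAddGroup.mk' Λ v = x ∧
        QuotientAddGroup.mk' Λ (g v) = y
    let RP : P → P → Prop := fun x y =>
      ∃ g ∈ G, ∃ v : Vn n, QuotientAddGroup.mk' Λ v = (x : Vn n ⧸ Λ) ∧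
        QuotientAddGroup.mk' Λ (g v) = (y : Vn n ⧸ Λ)
    -- (1) `A/G` is smooth iff `P/G` is smooth
    ((∀ x : Vn n ⧸ Λ, CSTAt Λ (G : Set (Vn n ≃ₗ[ℂ] Vn n)) x) ↔
      (∀ x : Vn n ⧸ Λ, x ∈ P → CSTAt Λ (G : Set (Vn n ≃ₗ[ℂ] Vn n)) x)) ∧
    -- (2) `A/G` fibers over `A₀/(A₀ ∩ P)` with fibers isomorphic to `P/G`
    (∃ p : Quot RG → (A0 ⧸ ((A0 ⊓ P).addSubgroupOf A0)),
      Continuous p ∧ Function.Surjective p ∧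
      ∀ b, Nonempty ((p ⁻¹' {b} : Set _) ≃ₜ Quot RP)) := by
  intro A0 P RG RP
  have hcompl : IsCompl W0 WP := ⟨disjoint_iff.2 hcompl1, codisjoint_iff.2 hcompl2⟩
  have hfix : ∀ g ∈ G, ∀ v ∈ W0, g v = v := fun g hg v hv => (hW0 v).1 hv g hg
  have hstable : ∀ g ∈ G, ∀ v ∈ WP, g v ∈ WP := fun g hg v hv =>
    hPstable g hg ▸ Submodule.mem_map_of_mem hv
  refine ⟨forall_cstAt_iff_forall_mem_torusImage hGΛ hfix hcompl2,
    Quot.lift (baseMap Λ hcompl) fun _ _ => baseMap_eq_of_torusOrbitRel hcompl hfix hstable,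
    continuous_quot_lift _ (continuous_baseMap hcompl), fun b => ?_, fun b => ?_⟩
  · obtain ⟨v, -, rfl⟩ := exists_mem_baseMap_mk_eq hcompl b
    exact ⟨Quot.mk _ (QuotientAddGroup.mk' Λ v), rfl⟩
  obtain ⟨v₀, hv₀, rfl⟩ := exists_mem_baseMap_mk_eq hcompl b
  have : DiscreteTopology Λ := hΛ.1
  have : T2Space (Quot RG) := t2Space_quot_torusOrbitRel hGΛ
  have : CompactSpace P := isCompact_iff_compactSpace.1 (isCompact_torusImage hWPlat)
  have hfiber := AddMonoidHom.eq_iff_exists_add_of_ker_eq (ker_baseMap hcompl)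
    (QuotientAddGroup.mk' Λ v₀)
  have hequiv := equivalence_torusOrbitRel hGΛ
  refine Quot.nonempty_homeomorph_preimage_lift _ (φ := fun y : P => QuotientAddGroup.mk' Λ v₀ + y)
    (by fun_prop) (fun y => (hfiber _).2 ⟨y, y.2, rfl⟩) (fun x hx => ?_) fun y y' => ?_
  · obtain ⟨y, hy, rfl⟩ := (hfiber x).1 hx
    exact ⟨⟨y, hy⟩, rfl⟩
  · exact (hequiv.quot_mk_eq_iff _ _).trans <|
      (torusOrbitRel_mk_add_iff hGΛ (hfix · · v₀ hv₀) _ _).trans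
        ((hequiv.comap Subtype.val).quot_mk_eq_iff y y').symm

/-- Let a finite group `G` act on an abelian variety `A = ℂ^n ⧸ Λ` by
automorphisms fixing the origin, let `A₀` be the connected component of `A^G` containing
`0` (the subtorus with tangent space `W₀ = T₀(A)^G`), and let `P` be the complementary
abelian subvariety of `A₀` with respect to a `G`-invariant polarization (a `G`-stable
abelian subvariety with tangent space `W_P` satisfying `W₀ ⊓ W_P = ⊥`, `W₀ ⊔ W_P = ⊤`).
Then `A/G` is smooth if and only if `P/G` is smooth (both encoded through the
Chevalley–Shephard–Todd criterion); moreover `A/G` fibers over the abelian variety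
`A₀/(A₀ ∩ P)` with all fibers isomorphic to `P/G`. -/
theorem smooth_iff_prym_smooth_and_fibration {n : ℕ}
    (Λ : AddSubgroup (Vn n)) (hΛ : IsLattice Λ)
    (G : Subgroup (Vn n ≃ₗ[ℂ] Vn n)) (hGfin : Finite G)
    (hGΛ : ∀ g ∈ G, ∀ v ∈ Λ, g v ∈ Λ)
    (W0 WP : Submodule ℂ (Vn n))
    (hW0 : ∀ v : Vn n, v ∈ W0 ↔ ∀ g ∈ G, g v = v)
    (hcompl1 : W0 ⊓ WP = ⊥) (hcompl2 : W0 ⊔ WP = ⊤)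
    (hPstable : ∀ g ∈ G, WP.map (g : Vn n →ₗ[ℂ] Vn n) = WP)
    (hW0lat : Submodule.span ℝ ((Λ : Set (Vn n)) ∩ (W0 : Set (Vn n))) =
      W0.restrictScalars ℝ)
    (hWPlat : Submodule.span ℝ ((Λ : Set (Vn n)) ∩ (WP : Set (Vn n))) =
      WP.restrictScalars ℝ) :
    -- `A₀` and `P` as subgroups of `A`
    let A0 : AddSubgroup (Vn n ⧸ Λ) :=
      W0.toAddSubgroup.map (QuotientAddGroup.mk' Λ)
    let P : AddSubgroup (Vn n ⧸ Λ) :=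
      WP.toAddSubgroup.map (QuotientAddGroup.mk' Λ)
    -- the orbit relation of `G` on `A` and on `P`
    let RG : (Vn n ⧸ Λ) → (Vn n ⧸ Λ) → Prop := fun x y =>
      ∃ g ∈ G, ∃ v : Vn n, QuotientAddGroup.mk' Λ v = x ∧
        QuotientAddGroup.mk' Λ (g v) = y
    let RP : P → P → Prop := fun x y =>
      ∃ g ∈ G, ∃ v : Vn n, QuotientAddGroup.mk' Λ v = (x : Vn n ⧸ Λ) ∧
        QuotientAddGroup.mk' Λ (g v) = (y : Vn n ⧸ Λ)
    -- (1) `A/G` is smooth iff `P/G` is smooth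
    ((∀ x : Vn n ⧸ Λ, CSTAt Λ (G : Set (Vn n ≃ₗ[ℂ] Vn n)) x) ↔
      (∀ x : Vn n ⧸ Λ, x ∈ P → CSTAt Λ (G : Set (Vn n ≃ₗ[ℂ] Vn n)) x)) ∧
    -- (2) `A/G` fibers over `A₀/(A₀ ∩ P)` with fibers isomorphic to `P/G`
    (∃ p : Quot RG → (A0 ⧸ ((A0 ⊓ P).addSubgroupOf A0)),
      Continuous p ∧ Function.Surjective p ∧
      ∀ b, Nonempty ((p ⁻¹' {b} : Set _) ≃ₜ Quot RP)) :=
  smooth_iff_prym_smooth_and_fibration_general Λ hΛ G hGfin hGΛ W0 WP hW0 hcompl1 hcompl2 hPstable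
    hWPlat
end
end

section
/- Let E be an elliptic curve, n ≥ 2, and let G = G(m,p,n) = H ⋊ S_n with m ∈ {2,3,4,6}, p | m, p ≥ 2, act on B = E^n, where H = {(ζ_m^{a_1},…,ζ_m^{a_n}) : Σa_i ≡ 0 mod p} acts coordinatewise by complex multiplication and S_n permutes coordinates. Then the quotient B/G is not smooth. -/
noncomputable section

/-- The imprimitive complex reflection group `G(m,p,n) = H(m,p,n) ⋊ Sₙ` realized inside
`GL_n(ℂ)`: monomial transformations `v ↦ (ζ^(a i) · v (π⁻¹ i))ᵢ` with `Σ aᵢ ≡ 0 mod p`,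
where `ζ` is a primitive `m`-th root of unity. -/
def Gmpn {n : ℕ} (ζ : ℂ) (p : ℕ) : Set (Vn n ≃ₗ[ℂ] Vn n) :=
  {g | ∃ (π : Equiv.Perm (Fin n)) (a : Fin n → ℕ), (p ∣ ∑ i, a i) ∧
    ∀ (v : Vn n) (i : Fin n), g v i = ζ ^ (a i) * v (π⁻¹ i)}

/-!
Choose `b` such that `η = ζ ^ b` has order 2, 3 or 4 and `η ^ (m / p) ≠ 1`. Then `‖η - 1‖ > 1`,
so some `u ∉ Λ` has `(η - 1) u ∈ Λ`: otherwise `(η - 1)⁻ᵏ Λ ⊆ Λ` for all `k`, contradicting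
discreteness. The element `g = diag(η, η⁻¹, 1, …, 1)` of `G(m,p,n)` fixes the point
`x = (u, 0, …, 0)`. A pseudoreflection of `G(m,p,n)` fixing `x` cannot move the first coordinate,
since `ζ ^ k u ∉ Λ`; as its fixed space is a hyperplane it is then the identity on the other
coordinates, so it scales `e₁` by some `ζ ^ a` with `p ∣ a`. Hence the group these
pseudoreflections generate scales `e₁` by `(m / p)`-th roots of unity only, and cannot contain `g`.
-/

open Filter Topology

theorem IsPrimitiveRoot.one_lt_norm_sub_one {η : ℂ} {k : ℕ} (h : IsPrimitiveRoot η k)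
    (hk2 : 2 ≤ k) (hk4 : k ≤ 4) : 1 < ‖η - 1‖ := by
  obtain ⟨c, hc, hsq⟩ : ∃ c : ℝ, 1 < c ∧ (η - 1) ^ 2 = -c * η := by
    interval_cases k
    · exact ⟨4, by norm_num, by rw [h.eq_neg_one_of_two_right]; push_cast; ring⟩
    · have hsum := h.geom_sum_eq_zero (by norm_num)
      simp only [Finset.sum_range_succ, Finset.sum_range_zero] at hsum
      exact ⟨3, by norm_num, by push_cast; linear_combination hsum⟩
    · have hsq := (h.pow_of_dvd two_ne_zero (by norm_num)).eq_neg_one_of_two_right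
      exact ⟨2, by norm_num, by push_cast; linear_combination hsq⟩
  have hnorm : ‖η - 1‖ ^ 2 = c := by
    rw [← norm_pow, hsq, norm_mul, norm_neg, h.norm'_eq_one (by omega), mul_one,
      Complex.norm_real, Real.norm_of_nonneg (by linarith)]
  nlinarith [norm_nonneg (η - 1)]

theorem AddSubgroup.exists_smul_mem_not_mem_of_one_lt_norm {𝕜 E : Type*} [NormedField 𝕜]
    [AddCommGroup E] [TopologicalSpace E] [Module 𝕜 E] [ContinuousSMul 𝕜 E]
    {Λ : AddSubgroup E} [DiscreteTopology Λ] (hΛ : Λ ≠ ⊥) {w : 𝕜} (hw : 1 < ‖w‖) :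
    ∃ u, w • u ∈ Λ ∧ u ∉ Λ := by
  by_contra! hstable
  obtain ⟨l, hl, hl0⟩ := Λ.bot_or_exists_ne_zero.resolve_left hΛ
  have hw0 : w ≠ 0 := norm_pos_iff.mp (by linarith)
  have hmem : ∀ k : ℕ, w⁻¹ ^ k • l ∈ Λ := by
    intro k
    induction k with
    | zero => simpa using hl
    | succ k ih => exact hstable _ (by rwa [pow_succ', mul_smul, smul_inv_smul₀ hw0])
  have htends : Tendsto (fun k => (⟨w⁻¹ ^ k • l, hmem k⟩ : Λ)) atTop (𝓝 0) := by
    rw [tendsto_subtype_rng]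
    simpa using (tendsto_pow_atTop_nhds_zero_of_norm_lt_one
      (by rw [norm_inv]; exact inv_lt_one_of_one_lt₀ hw : ‖w⁻¹‖ < 1)).smul_const l
  rw [nhds_discrete, tendsto_pure] at htends
  obtain ⟨k, hk⟩ := htends.exists
  simp [Subtype.ext_iff, hw0, hl0] at hk

theorem pow_mul_mem_iff {Λ : AddSubgroup ℂ} {ζ : ℂ} {m : ℕ} (hm : m ≠ 0) (hζ : ζ ^ m = 1)
    (hΛ : ∀ v ∈ Λ, ζ * v ∈ Λ) (k : ℕ) (v : ℂ) : ζ ^ k * v ∈ Λ ↔ v ∈ Λ := by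
  have pow_mem : ∀ (j : ℕ) (v : ℂ), v ∈ Λ → ζ ^ j * v ∈ Λ := by
    intro j
    induction j with
    | zero => simp
    | succ j ih => intro v hv; rw [pow_succ', mul_assoc]; exact hΛ _ (ih v hv)
  refine ⟨fun h => ?_, pow_mem k v⟩
  obtain ⟨m, rfl⟩ := Nat.exists_eq_succ_of_ne_zero hm
  have := pow_mem (m * k) _ h
  rwa [← mul_assoc, ← pow_add, show m * k + k = (m + 1) * k by ring, pow_mul, hζ, one_pow,
    one_mul] at this

theorem exists_pow_one_lt_norm_sub_one {m p : ℕ} (hm : m ∈ ({2, 3, 4, 6} : Set ℕ)) (hp : p ∣ m)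
    (hp2 : 2 ≤ p) {ζ : ℂ} (hζ : IsPrimitiveRoot ζ m) :
    ∃ b : ℕ, (ζ ^ b) ^ (m / p) ≠ 1 ∧ 1 < ‖ζ ^ b - 1‖ := by
  suffices ∃ b : ℕ, b ∣ m ∧ 2 ≤ m / b ∧ m / b ≤ 4 ∧ ¬ m ∣ b * (m / p) by
    obtain ⟨b, hbm, h2, h4, hndvd⟩ := this
    have hb0 : b ≠ 0 := by rintro rfl; simp at h2
    refine ⟨b, ?_, (hζ.pow_of_dvd hb0 hbm).one_lt_norm_sub_one h2 h4⟩
    rwa [← pow_mul, Ne, hζ.pow_eq_one_iff_dvd]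
  have hpm : p ≤ m := Nat.le_of_dvd (by rcases hm with rfl | rfl | rfl | rfl <;> norm_num) hp
  rcases hm with rfl | rfl | rfl | rfl <;> interval_cases p <;>
    first | omega | exact ⟨1, by decide⟩ | exact ⟨2, by decide⟩ | exact ⟨3, by decide⟩

def eigenSubgroup {K V : Type*} [Semiring K] [AddCommMonoid V] [Module K V] (H : Subgroup Kˣ)
    (v : V) : Subgroup (V ≃ₗ[K] V) where
  carrier := {f | ∃ c ∈ H, f v = (c : K) • v}
  mul_mem' := by
    rintro f g ⟨c, hc, hfc⟩ ⟨d, hd, hgd⟩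
    exact ⟨d * c, H.mul_mem hd hc, by simp [hgd, hfc, mul_smul]⟩
  one_mem' := ⟨1, H.one_mem, by simp⟩
  inv_mem' := by
    rintro f ⟨c, hc, hfc⟩
    refine ⟨c⁻¹, H.inv_mem hc, f.injective ?_⟩
    simp [hfc, smul_smul]

section Monomial

variable {n : ℕ} {ζ : ℂ} {f : Vn n ≃ₗ[ℂ] Vn n} {π : Equiv.Perm (Fin n)} {a : Fin n → ℕ}

theorem apply_single_of_perm_apply_eq (hf : ∀ v i, f v i = ζ ^ a i * v (π⁻¹ i)) {i : Fin n}
    (hπ : π i = i) (c : ℂ) : f (Pi.single i c) = ζ ^ a i • Pi.single i c := by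
  ext k
  rw [hf, Pi.smul_apply, smul_eq_mul]
  by_cases hk : k = i
  · rw [hk, Equiv.Perm.inv_eq_iff_eq.2 hπ.symm]
  · have hπk : π⁻¹ k ≠ i := fun h => hk ((Equiv.Perm.inv_eq_iff_eq.1 h).trans hπ)
    rw [Pi.single_eq_of_ne hk, Pi.single_eq_of_ne hπk, mul_zero, mul_zero]

theorem perm_apply_eq_of_fixesPt_single {Λ : AddSubgroup ℂ}
    (hΛ : ∀ (k : ℕ) (v : ℂ), ζ ^ k * v ∈ Λ ↔ v ∈ Λ) (hf : ∀ v i, f v i = ζ ^ a i * v (π⁻¹ i))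
    {i : Fin n} {u : ℂ} (hu : u ∉ Λ)
    (hfix : FixesPt (AddSubgroup.pi Set.univ fun _ => Λ) f
      (QuotientAddGroup.mk' _ (Pi.single i u))) :
    π i = i := by
  obtain ⟨v, hv, hfv⟩ := hfix
  obtain ⟨z, hz, hvz⟩ := (QuotientAddGroup.mk'_eq_mk' _).1 hv
  simp only [AddSubgroup.mem_pi, Set.mem_univ, true_implies] at hz hfv
  by_contra hji
  have hvi : v i + z i = u := by simpa using congrFun hvz i
  have hvj : v (π i) + z (π i) = 0 := by simpa [hji] using congrFun hvz (π i)
  have hu' : ζ ^ a (π i) * u = (f v - v) (π i) + ζ ^ a (π i) * z i - z (π i) := by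
    rw [Pi.sub_apply, hf, Equiv.Perm.inv_eq_iff_eq.2 rfl]
    linear_combination (-ζ ^ a (π i)) * hvi + hvj
  exact hu ((hΛ _ _).1 (hu' ▸ sub_mem (add_mem (hfv _) ((hΛ _ _).2 (hz i))) (hz _)))

theorem LinearMap.exists_smul_eq_of_finrank_range_eq_one {K V W : Type*} [DivisionRing K]
    [AddCommGroup V] [Module K V] [AddCommGroup W] [Module K W] (L : V →ₗ[K] W)
    (h : Module.finrank K (LinearMap.range L) = 1) {x : V} (hx : L x ≠ 0) (y : V) :
    ∃ c : K, c • L x = L y := by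
  obtain ⟨c, hc⟩ := (finrank_eq_one_iff_of_nonzero' (⟨L x, L.mem_range_self x⟩ : L.range)
    (by simpa using hx)).1 h ⟨L y, L.mem_range_self y⟩
  exact ⟨c, congrArg Subtype.val hc⟩

theorem pow_eq_one_of_isPseudoreflection (hf : ∀ v i, f v i = ζ ^ a i * v (π⁻¹ i))
    (hrefl : IsPseudoreflection f) {i : Fin n} (hπ : π i = i) (ha : ζ ^ a i ≠ 1) {j : Fin n}
    (hj : j ≠ i) : ζ ^ a j = 1 := by
  set L : Vn n →ₗ[ℂ] Vn n := 1 - (f : Vn n →ₗ[ℂ] Vn n)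
  have hL : ∀ v k, L v k = v k - ζ ^ a k * v (π⁻¹ k) := fun v k => by simp [L, hf]
  have hπi : π⁻¹ i = i := Equiv.Perm.inv_eq_iff_eq.2 hπ.symm
  have hLi : L (Pi.single i 1) i = 1 - ζ ^ a i := by simp [hL, hπi]
  have hLi0 : L (Pi.single i 1) ≠ 0 := fun h => ha <| by
    rwa [h, Pi.zero_apply, eq_comm, sub_eq_zero, eq_comm] at hLi
  obtain ⟨c, hc⟩ := L.exists_smul_eq_of_finrank_range_eq_one hrefl hLi0 (Pi.single j 1)
  have hc0 : c = 0 := by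
    have hci := congrFun hc i
    rw [Pi.smul_apply, hLi, hL, hπi, Pi.single_eq_of_ne hj.symm, smul_eq_mul, mul_zero,
      sub_zero, mul_eq_zero] at hci
    exact hci.resolve_right (sub_ne_zero.2 ha.symm)
  have hLj := congrFun hc j
  rw [hc0, zero_smul, Pi.zero_apply, hL, Pi.single_eq_same] at hLj
  by_cases hπj : π⁻¹ j = j
  · rwa [hπj, Pi.single_eq_same, mul_one, eq_comm, sub_eq_zero, eq_comm] at hLj
  · rw [Pi.single_eq_of_ne hπj, mul_zero, sub_zero] at hLj
    exact absurd hLj zero_ne_one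

theorem mem_eigenSubgroup_of_isPseudoreflection {m p : ℕ} (hp : p ∣ m)
    (hζ : IsPrimitiveRoot ζ m) (hm : m ≠ 0) {Λ : AddSubgroup ℂ}
    (hΛ : ∀ (k : ℕ) (v : ℂ), ζ ^ k * v ∈ Λ ↔ v ∈ Λ) {i : Fin n} {u : ℂ} (hu : u ∉ Λ)
    (hf : f ∈ Gmpn ζ p)
    (hfix : FixesPt (AddSubgroup.pi Set.univ fun _ => Λ) f
      (QuotientAddGroup.mk' _ (Pi.single i u)))
    (hrefl : IsPseudoreflection f) :
    f ∈ eigenSubgroup (rootsOfUnity (m / p) ℂ) (Pi.single i 1) := by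
  obtain ⟨π, a, hsum, hfa⟩ := hf
  have hπ := perm_apply_eq_of_fixesPt_single hΛ hfa hu hfix
  refine ⟨Units.mk0 (ζ ^ a i) (pow_ne_zero _ (hζ.ne_zero hm)), ?_,
    apply_single_of_perm_apply_eq hfa hπ 1⟩
  rw [mem_rootsOfUnity, Units.ext_iff, Units.val_pow_eq_pow_val, Units.val_mk0, Units.val_one]
  by_cases h1 : ζ ^ a i = 1
  · rw [h1, one_pow]
  have hmj : ∀ j ∈ Finset.univ.erase i, m ∣ a j := fun j hj => (hζ.pow_eq_one_iff_dvd _).1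
    (pow_eq_one_of_isPseudoreflection hfa hrefl hπ h1 (Finset.ne_of_mem_erase hj))
  rw [← Finset.add_sum_erase _ _ (Finset.mem_univ i)] at hsum
  obtain ⟨t, ht⟩ := (Nat.dvd_add_left (Finset.dvd_sum fun j hj => hp.trans (hmj j hj))).1 hsum
  rw [← pow_mul, hζ.pow_eq_one_iff_dvd, ht, mul_right_comm, Nat.mul_div_cancel' hp]
  exact dvd_mul_right m t

end Monomial

def diagPow {n : ℕ} {ζ : ℂ} (hζ : ζ ≠ 0) (a : Fin n → ℕ) : Vn n ≃ₗ[ℂ] Vn n :=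
  LinearEquiv.piCongrRight fun i => LinearEquiv.smulOfNeZero ℂ ℂ (ζ ^ a i) (pow_ne_zero _ hζ)

section Diagonal

variable {n : ℕ} {ζ : ℂ} (hζ : ζ ≠ 0) {a : Fin n → ℕ}

theorem diagPow_apply (v : Vn n) (i : Fin n) : diagPow hζ a v i = ζ ^ a i * v i := rfl

theorem diagPow_mem_Gmpn {p : ℕ} (h : p ∣ ∑ i, a i) : diagPow hζ a ∈ Gmpn ζ p :=
  ⟨1, a, h, fun v i => by rw [diagPow_apply, inv_one, Equiv.Perm.one_apply]⟩

theorem fixesPt_diagPow_single {Λ : AddSubgroup ℂ} {i : Fin n} {u : ℂ}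
    (h : (ζ ^ a i - 1) * u ∈ Λ) :
    FixesPt (AddSubgroup.pi Set.univ fun _ => Λ) (diagPow hζ a)
      (QuotientAddGroup.mk' _ (Pi.single i u)) := by
  refine ⟨Pi.single i u, rfl, fun j _ => ?_⟩
  rw [Pi.sub_apply, diagPow_apply]
  by_cases hj : j = i
  · rw [hj, Pi.single_eq_same, ← sub_one_mul]
    exact h
  · rw [Pi.single_eq_of_ne hj, mul_zero, sub_zero]
    exact Λ.zero_mem

end Diagonal

/-- Let `E = ℂ ⧸ Λ` be an elliptic curve, `n ≥ 2`, and let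
`G = G(m,p,n) = H ⋊ Sₙ` with `m ∈ {2,3,4,6}`, `p ∣ m`, `p ≥ 2`, act on `B = Eⁿ`, where `H`
acts coordinatewise by complex multiplication by powers of a primitive `m`-th root of unity
`ζ` and `Sₙ` permutes the coordinates.  Then the quotient `B/G` is not smooth. -/
theorem Gmpn_quotient_not_smooth {n m p : ℕ} (hn : 2 ≤ n)
    (hm : m ∈ ({2, 3, 4, 6} : Set ℕ)) (hp : p ∣ m) (hp2 : 2 ≤ p)
    (ζ : ℂ) (hζ : IsPrimitiveRoot ζ m)
    (Λ : AddSubgroup ℂ) (hdisc : DiscreteTopology Λ)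
    (hspan : Submodule.span ℝ (Λ : Set ℂ) = ⊤)
    (hcm : ∀ v ∈ Λ, ζ * v ∈ Λ) :
    ¬ SmoothQuotient (AddSubgroup.pi Set.univ fun _ : Fin n => Λ) (Gmpn ζ p) := by
  intro hsmooth
  have hm0 : m ≠ 0 := by rintro rfl; simp at hm
  obtain ⟨b, hb, hb_norm⟩ := exists_pow_one_lt_norm_sub_one hm hp hp2 hζ
  have hΛ0 : Λ ≠ ⊥ := by rintro rfl; simp at hspan
  obtain ⟨u, hu, huΛ⟩ := AddSubgroup.exists_smul_mem_not_mem_of_one_lt_norm hΛ0 hb_norm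
  let i₀ : Fin n := ⟨0, by omega⟩
  let i₁ : Fin n := ⟨1, by omega⟩
  let a : Fin n → ℕ := Pi.single i₀ b + Pi.single i₁ ((m - 1) * b)
  have ha₀ : a i₀ = b := by simp [a, i₀, i₁]
  have hζ0 := hζ.ne_zero hm0
  have hg : diagPow hζ0 a ∈ Gmpn ζ p := diagPow_mem_Gmpn hζ0 <| by
    simp only [a, Pi.add_apply, Finset.sum_add_distrib, Finset.sum_pi_single', Finset.mem_univ,
      if_true]
    rw [Nat.sub_one_mul, Nat.add_sub_cancel' (Nat.le_mul_of_pos_left b (Nat.pos_of_ne_zero hm0))]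
    exact hp.mul_right b
  have hfix := fixesPt_diagPow_single (Λ := Λ) hζ0 (a := a) (i := i₀)
    (by rwa [ha₀, ← smul_eq_mul])
  have hΛζ := pow_mul_mem_iff hm0 hζ.pow_eq_one hcm
  obtain ⟨c, hc, hgc⟩ := (Subgroup.closure_le _).2 (fun f hf =>
    mem_eigenSubgroup_of_isPseudoreflection hp hζ hm0 hΛζ huΛ hf.1 hf.2.1 hf.2.2)
    (hsmooth _ _ hg hfix)
  have hcb : (c : ℂ) = ζ ^ b := by simpa [diagPow_apply, ha₀] using (congrFun hgc i₀).symm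
  rw [mem_rootsOfUnity, Units.ext_iff, Units.val_pow_eq_pow_val, hcb, Units.val_one] at hc
  exact hb hc
end
end

section
/- Let E be an elliptic curve, n ≥ 1, m ∈ {2,3,4,6} with ζ_m acting on E, and let G = G(m,1,n) = μ_m^n ⋊ S_n act on E^n by coordinatewise multiplication by roots of unity and permutation of coordinates. Then for every point x ∈ E^n, the stabilizer Stab_G(x) is generated by pseudoreflections; consequently E^n/G is smooth. -/
noncomputable section

/-!
Let `g ∈ G(M,1,n)` have permutation `π` and coefficients `c`, and fix `[v] ∈ (ℂ/Λ)ⁿ`. If `π`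
sends `j` to `i ≠ j`, the `i`-th coordinate of `g v ≡ v` reads `cᵢ vⱼ ≡ vᵢ (mod Λ)`, which is
exactly the condition for the pseudoreflection exchanging coordinates `i, j` with weights
`cᵢ, cᵢ⁻¹` to fix `[v]`; dividing `g` by it strictly shrinks the support of `π`. When `π = 1`,
`g` is the product of the diagonal pseudoreflections `diag(1, …, cᵢ, …, 1)`, each fixing `[v]`.
The group `G(m,1,n)` is `G(μₘ,1,n)`, and `μₘ` preserves `Λ` because it is generated by `ζ`.
-/

namespace ComplexReflection

open Equiv

variable {n : ℕ} {M : Subgroup ℂˣ} {Λ : AddSubgroup ℂ}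

def monomial (π : Perm (Fin n)) (c : Fin n → ℂˣ) : Vn n ≃ₗ[ℂ] Vn n :=
  (LinearEquiv.funCongrLeft ℂ ℂ π⁻¹).trans
    (LinearEquiv.piCongrRight fun i => LinearEquiv.smulOfUnit (c i))

@[simp]
theorem monomial_apply (π : Perm (Fin n)) (c : Fin n → ℂˣ) (v : Vn n) (i : Fin n) :
    monomial π c v i = c i * v (π⁻¹ i) :=
  rfl

theorem monomial_one : monomial (1 : Perm (Fin n)) 1 = 1 := by
  ext v i
  simp

theorem monomial_mul (π σ : Perm (Fin n)) (c d : Fin n → ℂˣ) :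
    monomial π c * monomial σ d = monomial (π * σ) fun i => c i * d (π⁻¹ i) := by
  ext v i
  simp [mul_assoc]

theorem monomial_inv (π : Perm (Fin n)) (c : Fin n → ℂˣ) :
    (monomial π c)⁻¹ = monomial π⁻¹ fun i => (c (π i))⁻¹ := by
  refine inv_eq_of_mul_eq_one_right ?_
  rw [monomial_mul, mul_inv_cancel, ← monomial_one]
  congr 1
  ext i
  simp

theorem monomial_inv_mul (π σ : Perm (Fin n)) (c d : Fin n → ℂˣ) :
    (monomial π c)⁻¹ * monomial σ d = monomial (π⁻¹ * σ) fun i => (c (π i))⁻¹ * d (π i) := by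
  rw [monomial_inv, monomial_mul, inv_inv]

/-- The group `G(M,1,n) = Mⁿ ⋊ Sₙ` of monomial transformations with entries in `M`. -/
def monomialSubgroup (n : ℕ) (M : Subgroup ℂˣ) : Subgroup (Vn n ≃ₗ[ℂ] Vn n) where
  carrier := {g | ∃ π c, (∀ i, c i ∈ M) ∧ g = monomial π c}
  mul_mem' := by
    rintro _ _ ⟨π, c, hc, rfl⟩ ⟨σ, d, hd, rfl⟩
    exact ⟨_, _, fun i => M.mul_mem (hc i) (hd _), monomial_mul π σ c d⟩
  one_mem' := ⟨1, 1, fun _ => M.one_mem, monomial_one.symm⟩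
  inv_mem' := by
    rintro _ ⟨π, c, hc, rfl⟩
    exact ⟨_, _, fun i => M.inv_mem (hc _), monomial_inv π c⟩

theorem monomial_mem_monomialSubgroup (π : Perm (Fin n)) {c : Fin n → ℂˣ}
    (hc : ∀ i, c i ∈ M) : monomial π c ∈ monomialSubgroup n M :=
  ⟨π, c, hc, rfl⟩

theorem mulSingle_mem (i k : Fin n) {u : ℂˣ} (hu : u ∈ M) :
    (Pi.mulSingle i u : Fin n → ℂˣ) k ∈ M := by
  rw [Pi.mulSingle_apply]
  split_ifs
  exacts [hu, M.one_mem]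

def piLattice (n : ℕ) (Λ : AddSubgroup ℂ) : AddSubgroup (Vn n) :=
  AddSubgroup.pi Set.univ fun _ => Λ

theorem mem_piLattice {w : Vn n} : w ∈ piLattice n Λ ↔ ∀ i, w i ∈ Λ := by
  simp [piLattice, AddSubgroup.mem_pi]

theorem monomial_apply_sub_mem_piLattice_iff (π : Perm (Fin n))
    (c : Fin n → ℂˣ) (v : Vn n) :
    monomial π c v - v ∈ piLattice n Λ ↔ ∀ i, c i * v (π⁻¹ i) - v i ∈ Λ := by
  simp [mem_piLattice]

theorem isPseudoreflection_of_sub_apply_eq_smul {g : Vn n ≃ₗ[ℂ] Vn n} {w : Vn n} (hw : w ≠ 0)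
    (φ : Vn n → ℂ) (hg : ∀ v, v - g v = φ v • w) {v₀ : Vn n} (hv₀ : φ v₀ ≠ 0) :
    IsPseudoreflection g := by
  have hrange : LinearMap.range ((1 : Vn n →ₗ[ℂ] Vn n) - (g : Vn n →ₗ[ℂ] Vn n)) = ℂ ∙ w := by
    refine le_antisymm ?_ ?_
    · rintro _ ⟨v, rfl⟩
      simpa [hg] using Submodule.smul_mem _ (φ v) (Submodule.mem_span_singleton_self w)
    · rw [Submodule.span_singleton_le_iff_mem]
      exact ⟨(φ v₀)⁻¹ • v₀, by simp [hg, smul_smul, hv₀]⟩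
  rw [IsPseudoreflection, hrange, finrank_span_singleton hw]

theorem isPseudoreflection_monomial_mulSingle (i : Fin n) {u : ℂˣ} (hu : u ≠ 1) :
    IsPseudoreflection (monomial 1 (Pi.mulSingle i u)) := by
  refine isPseudoreflection_of_sub_apply_eq_smul (w := Pi.single i (1 - (u : ℂ)))
    (fun h => hu (Units.val_eq_one.mp (sub_eq_zero.mp (by simpa using congrFun h i)).symm))
    (fun v => v i) (fun v => ?_) (v₀ := Pi.single i 1) (by simp)
  ext k
  rcases eq_or_ne k i with rfl | hk
  · simp [mul_sub, mul_comm]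
  · simp [hk]

theorem isPseudoreflection_monomial_swap {i j : Fin n} (hij : i ≠ j) (u : ℂˣ) :
    IsPseudoreflection (monomial (swap i j) (Pi.mulSingle i u * Pi.mulSingle j u⁻¹)) := by
  refine isPseudoreflection_of_sub_apply_eq_smul
    (w := Pi.single i 1 - ((u⁻¹ : ℂˣ) : ℂ) • Pi.single j 1)
    (fun h => by simpa [hij.symm] using congrFun h i) (fun v => v i - u * v j)
    (fun v => ?_) (v₀ := Pi.single i 1) (by simp [hij.symm])
  ext k
  rcases eq_or_ne k i with rfl | hki
  · simp [hij]
  rcases eq_or_ne k j with rfl | hkj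
  · simp [hki, sub_mul, mul_comm (u : ℂ), mul_comm (v i)]
  · simp [hki, hkj, swap_apply_of_ne_of_ne hki hkj]

theorem apply_mem_piLattice (hΛ : ∀ u ∈ M, ∀ z ∈ Λ, (u : ℂ) * z ∈ Λ) {g : Vn n ≃ₗ[ℂ] Vn n}
    (hg : g ∈ monomialSubgroup n M) {w : Vn n} (hw : w ∈ piLattice n Λ) : g w ∈ piLattice n Λ := by
  obtain ⟨π, c, hc, rfl⟩ := hg
  rw [mem_piLattice] at hw ⊢
  exact fun i => hΛ _ (hc i) _ (hw _)

theorem inv_mul_apply_sub_mem_piLattice (hΛ : ∀ u ∈ M, ∀ z ∈ Λ, (u : ℂ) * z ∈ Λ)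
    {r g : Vn n ≃ₗ[ℂ] Vn n} (hr : r ∈ monomialSubgroup n M)
    {v : Vn n} (hrv : r v - v ∈ piLattice n Λ) (hgv : g v - v ∈ piLattice n Λ) :
    (r⁻¹ * g) v - v ∈ piLattice n Λ := by
  have hsplit : (r⁻¹ * g) v - v = r⁻¹ (g v - v) - r⁻¹ (r v - v) := by
    simp [LinearEquiv.coe_inv]
  rw [hsplit]
  exact sub_mem (apply_mem_piLattice hΛ (inv_mem hr) hgv)
    (apply_mem_piLattice hΛ (inv_mem hr) hrv)

theorem monomial_swap_apply_sub_mem_piLattice (hΛ : ∀ u ∈ M, ∀ z ∈ Λ, (u : ℂ) * z ∈ Λ)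
    {u : ℂˣ} (hu : u ∈ M) {i j : Fin n} (hij : i ≠ j)
    {v : Vn n} (huv : u * v j - v i ∈ Λ) :
    monomial (swap i j) (Pi.mulSingle i u * Pi.mulSingle j u⁻¹) v - v ∈ piLattice n Λ := by
  rw [monomial_apply_sub_mem_piLattice_iff]
  intro k
  rcases eq_or_ne k i with rfl | hki
  · simpa [hij] using huv
  rcases eq_or_ne k j with rfl | hkj
  · have hmul := neg_mem (hΛ _ (M.inv_mem hu) _ huv)
    convert hmul using 1
    simp [hki, mul_sub]
  · simp [hki, hkj, swap_apply_of_ne_of_ne hki hkj]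

def reflectionsFixing (M : Subgroup ℂˣ) (Λ : AddSubgroup ℂ) (v : Vn n) :
    Set (Vn n ≃ₗ[ℂ] Vn n) :=
  {h | h ∈ monomialSubgroup n M ∧ h v - v ∈ piLattice n Λ ∧ IsPseudoreflection h}

theorem monomial_mulSingle_apply_sub_mem_piLattice (i : Fin n) {u : ℂˣ} {v : Vn n}
    (huv : u * v i - v i ∈ Λ) : monomial 1 (Pi.mulSingle i u) v - v ∈ piLattice n Λ := by
  rw [monomial_apply_sub_mem_piLattice_iff]
  intro k
  rcases eq_or_ne k i with rfl | hk
  · simpa using huv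
  · simp [hk]

theorem monomial_mulSingle_mem_closure {u : ℂˣ} (hu : u ∈ M) (i : Fin n) {v : Vn n}
    (huv : u * v i - v i ∈ Λ) :
    monomial 1 (Pi.mulSingle i u) ∈ Subgroup.closure (reflectionsFixing M Λ v) := by
  by_cases hu1 : u = 1
  · simp [hu1, monomial_one]
  exact Subgroup.subset_closure ⟨monomial_mem_monomialSubgroup 1 (mulSingle_mem i · hu),
    monomial_mulSingle_apply_sub_mem_piLattice i huv,
    isPseudoreflection_monomial_mulSingle i hu1⟩

theorem monomial_one_mem_closure (hΛ : ∀ u ∈ M, ∀ z ∈ Λ, (u : ℂ) * z ∈ Λ) (v : Vn n)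
    (s : Finset (Fin n)) (c : Fin n → ℂˣ) (hc : ∀ i, c i ∈ M) (hc1 : ∀ i ∉ s, c i = 1)
    (hcv : monomial 1 c v - v ∈ piLattice n Λ) :
    monomial 1 c ∈ Subgroup.closure (reflectionsFixing M Λ v) := by
  induction s using Finset.induction_on generalizing c with
  | empty =>
    obtain rfl : c = 1 := funext fun i => hc1 i (Finset.notMem_empty i)
    rw [monomial_one]
    exact Subgroup.one_mem _
  | insert i s _ ih =>
    have hciv : c i * v i - v i ∈ Λ := by
      simpa using (monomial_apply_sub_mem_piLattice_iff _ _ _).1 hcv i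
    set d := monomial 1 (Pi.mulSingle i (c i))
    have hd : d ∈ Subgroup.closure (reflectionsFixing M Λ v) :=
      monomial_mulSingle_mem_closure (hc i) i hciv
    have hrest : d⁻¹ * monomial 1 c ∈ Subgroup.closure (reflectionsFixing M Λ v) := by
      have hfix := inv_mul_apply_sub_mem_piLattice hΛ
        (monomial_mem_monomialSubgroup 1 (mulSingle_mem i · (hc i)))
        (monomial_mulSingle_apply_sub_mem_piLattice i hciv) hcv
      rw [monomial_inv_mul, inv_one, one_mul] at hfix ⊢
      refine ih _ (fun k => M.mul_mem (M.inv_mem (mulSingle_mem _ _ (hc i))) (hc _)) ?_ hfix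
      intro k hk
      rcases eq_or_ne k i with rfl | hki
      · simp
      · simp [hki, hc1 k (by simp [hki, hk])]
    rw [← mul_inv_cancel_left d (monomial 1 c)]
    exact mul_mem hd hrest

theorem monomial_mem_closure (hΛ : ∀ u ∈ M, ∀ z ∈ Λ, (u : ℂ) * z ∈ Λ) (v : Vn n)
    (π : Perm (Fin n)) (c : Fin n → ℂˣ) (hc : ∀ i, c i ∈ M)
    (hcv : monomial π c v - v ∈ piLattice n Λ) :
    monomial π c ∈ Subgroup.closure (reflectionsFixing M Λ v) := by
  induction hN : π.support.card using Nat.strong_induction_on generalizing π c with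
  | _ N ih =>
  by_cases hπ : π = 1
  · subst hπ
    exact monomial_one_mem_closure hΛ v Finset.univ c hc (by simp) hcv
  obtain ⟨j, hj⟩ : ∃ j, π j ≠ j := not_forall.mp fun h => hπ (Perm.ext h)
  set i := π j
  have hij : i ≠ j := hj
  set r := monomial (swap i j) (Pi.mulSingle i (c i) * Pi.mulSingle j (c i)⁻¹)
  have hrM : r ∈ monomialSubgroup n M := monomial_mem_monomialSubgroup _ fun k =>
    M.mul_mem (mulSingle_mem i k (hc i)) (mulSingle_mem j k (M.inv_mem (hc i)))
  have hrv : r v - v ∈ piLattice n Λ := monomial_swap_apply_sub_mem_piLattice hΛ (hc i) hij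
    (by simpa [i] using (monomial_apply_sub_mem_piLattice_iff _ _ _).1 hcv i)
  have hr : r ∈ Subgroup.closure (reflectionsFixing M Λ v) :=
    Subgroup.subset_closure ⟨hrM, hrv, isPseudoreflection_monomial_swap hij (c i)⟩
  have hrest : r⁻¹ * monomial π c ∈ Subgroup.closure (reflectionsFixing M Λ v) := by
    have hfix := inv_mul_apply_sub_mem_piLattice hΛ hrM hrv hcv
    rw [monomial_inv_mul] at hfix ⊢
    refine ih _ ?_ _ _ (fun k => M.mul_mem (M.inv_mem ?_) (hc _)) hfix rfl
    · rw [← hN, swap_inv, swap_comm]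
      exact Perm.card_support_swap_mul hj
    · exact M.mul_mem (mulSingle_mem _ _ (hc i)) (mulSingle_mem _ _ (M.inv_mem (hc i)))
  rw [← mul_inv_cancel_left r (monomial π c)]
  exact mul_mem hr hrest

theorem smoothQuotient_monomialSubgroup (hΛ : ∀ u ∈ M, ∀ z ∈ Λ, (u : ℂ) * z ∈ Λ) :
    SmoothQuotient (piLattice n Λ) (monomialSubgroup n M) := by
  rintro x g ⟨π, c, hc, rfl⟩ ⟨v, rfl, hcv⟩
  refine Subgroup.closure_mono ?_ (monomial_mem_closure hΛ v π c hc hcv)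
  rintro h ⟨hM, hhv, hrefl⟩
  exact ⟨hM, ⟨v, rfl, hhv⟩, hrefl⟩

theorem Gmpn_one_eq_monomialSubgroup {m : ℕ} [NeZero m] {ζ : ℂ} (hζ : IsPrimitiveRoot ζ m) :
    Gmpn ζ 1 = (monomialSubgroup n (rootsOfUnity m ℂ) : Set (Vn n ≃ₗ[ℂ] Vn n)) := by
  ext g
  constructor
  · rintro ⟨π, a, -, hg⟩
    set u := (hζ.isUnit (NeZero.ne m)).unit
    refine ⟨π, fun i => u ^ a i, fun i => ?_, ?_⟩
    · rw [mem_rootsOfUnity, ← pow_mul, mul_comm, pow_mul]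
      simp [Units.ext_iff, u, hζ.pow_eq_one]
    · ext v i
      simp [hg, u]
  · rintro ⟨π, c, hc, rfl⟩
    choose a ha using fun i =>
      hζ.eq_pow_of_pow_eq_one <| by
        simpa [Units.ext_iff] using (mem_rootsOfUnity m (c i)).1 (hc i)
    exact ⟨π, a, one_dvd _, fun v i => by simp [(ha i).2]⟩

theorem rootsOfUnity_mul_mem {m : ℕ} [NeZero m] {ζ : ℂ} (hζ : IsPrimitiveRoot ζ m)
    (hΛ : ∀ z ∈ Λ, ζ * z ∈ Λ) : ∀ u ∈ rootsOfUnity m ℂ, ∀ z ∈ Λ, (u : ℂ) * z ∈ Λ := by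
  intro u hu z hz
  obtain ⟨k, -, hk⟩ :=
    hζ.eq_pow_of_pow_eq_one (by simpa [Units.ext_iff] using (mem_rootsOfUnity m u).1 hu)
  have hpow : ∀ k : ℕ, ζ ^ k * z ∈ Λ := by
    intro k
    induction k with
    | zero => simpa using hz
    | succ k ih => simpa [pow_succ', mul_assoc] using hΛ _ ih
  exact hk ▸ hpow k

end ComplexReflection

theorem Gm1n_quotient_smooth_general {n m : ℕ}
    (hm : m ∈ ({2, 3, 4, 6} : Set ℕ))
    (ζ : ℂ) (hζ : IsPrimitiveRoot ζ m)
    (Λ : AddSubgroup ℂ)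
    (hcm : ∀ v ∈ Λ, ζ * v ∈ Λ) :
    SmoothQuotient (AddSubgroup.pi Set.univ fun _ : Fin n => Λ) (Gmpn ζ 1) := by
  have : NeZero m := ⟨by rcases hm with rfl | rfl | rfl | rfl <;> norm_num⟩
  rw [ComplexReflection.Gmpn_one_eq_monomialSubgroup hζ]
  exact ComplexReflection.smoothQuotient_monomialSubgroup
    (ComplexReflection.rootsOfUnity_mul_mem hζ hcm)

/-- Let `E = ℂ ⧸ Λ` be an elliptic curve, `n ≥ 1`, `m ∈ {2,3,4,6}` with a
primitive `m`-th root of unity `ζ` acting on `E`, and let `G = G(m,1,n) = μₘⁿ ⋊ Sₙ` act on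
`Eⁿ` by coordinatewise multiplication by `m`-th roots of unity and permutation of the
coordinates.  Then for every point `x ∈ Eⁿ` the stabilizer of `x` in `G` is generated by
pseudoreflections; consequently (Chevalley–Shephard–Todd) `Eⁿ/G` is smooth. -/
theorem Gm1n_quotient_smooth {n m : ℕ} (hn : 1 ≤ n)
    (hm : m ∈ ({2, 3, 4, 6} : Set ℕ))
    (ζ : ℂ) (hζ : IsPrimitiveRoot ζ m)
    (Λ : AddSubgroup ℂ) (hdisc : DiscreteTopology Λ)
    (hspan : Submodule.span ℝ (Λ : Set ℂ) = ⊤)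
    (hcm : ∀ v ∈ Λ, ζ * v ∈ Λ) :
    SmoothQuotient (AddSubgroup.pi Set.univ fun _ : Fin n => Λ) (Gmpn ζ 1) :=
  Gm1n_quotient_smooth_general hm ζ hζ Λ hcm
end
end

section
/- Let E be an elliptic curve and let A = {(x_1,…,x_{n+1}) ∈ E^{n+1} : x_1 + ⋯ + x_{n+1} = 0}, with the symmetric group S_{n+1} acting by permuting coordinates. Then for every point x ∈ A, the stabilizer Stab_{S_{n+1}}(x) is generated by transpositions fixing x; consequently A/S_{n+1} is smooth. -/
/-!
A point of `(ℂ ⧸ Λ)^{n+1}` is a function `f` from the coordinates to `ℂ ⧸ Λ`, and its stabilizer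
in `S_{n+1}` is the Young subgroup permuting the fibres of `f`. A subgroup generated by
transpositions contains every permutation of a finite set that moves each point within its
orbit, and `π` moves `i` to `π i` along the transposition `swap i (π i)`, which fixes `f` because
`f (π i) = f i`.
-/

open Equiv

theorem Function.apply_swap_eq_self {α β : Type*} [DecidableEq α] {f : α → β} {a b : α}
    (h : f a = f b) (i : α) : f (Equiv.swap a b i) = f i := by
  rw [Equiv.swap_apply_def]
  split_ifs with hia hib
  · rw [hia, h]
  · rw [hib, h]
  · rfl

theorem Equiv.Perm.mem_closure_isSwap_of_apply_eq {α β : Type*} [DecidableEq α] [Finite α]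
    (f : α → β) {π : Perm α} (hπ : ∀ i, f (π i) = f i) :
    π ∈ Subgroup.closure {τ : Perm α | τ.IsSwap ∧ ∀ i, f (τ i) = f i} := by
  refine (mem_closure_isSwap fun τ hτ => hτ.1).2 ⟨Set.toFinite _, fun i => ?_⟩
  by_cases hi : π i = i
  · rw [hi]
    exact MulAction.mem_orbit_self i
  · have hswap : swap i (π i) ∈ Subgroup.closure {τ : Perm α | τ.IsSwap ∧ ∀ j, f (τ j) = f j} :=
      Subgroup.subset_closure ⟨⟨i, π i, Ne.symm hi, rfl⟩,
        Function.apply_swap_eq_self (hπ i).symm⟩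
    exact ⟨⟨swap i (π i), hswap⟩, swap_apply_left i (π i)⟩

theorem AddSubgroup.comp_perm_inv_sub_mem_pi_iff {α G : Type*} [AddCommGroup G]
    (H : AddSubgroup G) (v : α → G) (π : Perm α) :
    (fun i => v (π⁻¹ i)) - v ∈ AddSubgroup.pi Set.univ (fun _ => H) ↔
      ∀ i, (v (π i) : G ⧸ H) = v i := by
  simp only [AddSubgroup.mem_pi, Set.mem_univ, true_implies, Pi.sub_apply,
    QuotientAddGroup.eq_iff_sub_mem]
  rw [← π.forall_congr_right]
  simp only [Perm.coe_inv, symm_apply_apply, sub_mem_comm_iff]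

/-- Let `E = ℂ ⧸ Λ` be an elliptic curve and let
`A = {(x₁, …, x_{n+1}) ∈ E^{n+1} : x₁ + ⋯ + x_{n+1} = 0}`, with the symmetric group
`S_{n+1}` acting by permuting the coordinates.  Then for every point `x ∈ A` the stabilizer
of `x` in `S_{n+1}` is generated by the transpositions fixing `x`; consequently
(Chevalley–Shephard–Todd) `A/S_{n+1}` is smooth.
Here `E^{n+1} = (Fin (n+1) → ℂ) ⧸ Λ^{n+1}`, a permutation `π` fixes `x` when some (hence
any) representative `v` of `x` satisfies `v ∘ π⁻¹ ≡ v mod Λ^{n+1}`, and `A` is the kernel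
of the sum map `E^{n+1} → E`. -/
theorem stabilizer_generated_by_transpositions {n : ℕ}
    (Λ : AddSubgroup ℂ) :
    ∀ x : (Fin (n + 1) → ℂ) ⧸ (AddSubgroup.pi Set.univ fun _ : Fin (n + 1) => Λ),
      x ∈ (QuotientAddGroup.map (AddSubgroup.pi Set.univ fun _ : Fin (n + 1) => Λ) Λ
          (∑ i : Fin (n + 1), Pi.evalAddMonoidHom (fun _ : Fin (n + 1) => ℂ) i)
          (fun v hv => by
            simpa using AddSubgroup.sum_mem Λ
              (fun i _ => hv i (Set.mem_univ i)))).ker →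
      ∀ π : Equiv.Perm (Fin (n + 1)),
        (∃ v : Fin (n + 1) → ℂ,
            QuotientAddGroup.mk' (AddSubgroup.pi Set.univ fun _ : Fin (n + 1) => Λ) v = x ∧
            (fun i => v (π⁻¹ i)) - v ∈ (AddSubgroup.pi Set.univ fun _ : Fin (n + 1) => Λ)) →
        π ∈ Subgroup.closure {τ : Equiv.Perm (Fin (n + 1)) | τ.IsSwap ∧
          ∃ v : Fin (n + 1) → ℂ,
            QuotientAddGroup.mk' (AddSubgroup.pi Set.univ fun _ : Fin (n + 1) => Λ) v = x ∧
            (fun i => v (τ⁻¹ i)) - v ∈ (AddSubgroup.pi Set.univ fun _ : Fin (n + 1) => Λ)} := by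
  rintro x - π ⟨v, rfl, hπ⟩
  refine Subgroup.closure_mono ?_ <| Perm.mem_closure_isSwap_of_apply_eq (fun i => (v i : ℂ ⧸ Λ))
    ((AddSubgroup.comp_perm_inv_sub_mem_pi_iff Λ v π).1 hπ)
  rintro τ ⟨hτ, hτv⟩
  exact ⟨hτ, v, rfl, (AddSubgroup.comp_perm_inv_sub_mem_pi_iff Λ v τ).2 hτv⟩
end

section
/- Let G = G(m,p,n) with m ≥ 2, n ≥ 3 act on an abelian variety A of dimension n with irreducible analytic representation as in Shephard–Todd. Let E_1 ⊆ A be the image of the coordinate line ℂe_1 under the exponential map. Then E_1 is an elliptic curve (i.e., an abelian subvariety of dimension 1), the element (ζ_m, ζ_m^{-1}, 1, …, 1) ∈ H induces an automorphism of E_1 of order m, and hence m ∈ {2,3,4,6}. -/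
/-!
For `v ∈ Λ`, the element `ρ (1 - σ) v = m (v₁ - v₂) e₁` lies in `Λ`, and `ρ (1 - σ)` maps `ℂⁿ`
onto `ℂ e₁`; hence `Λ ∩ ℂ e₁` spans `ℂ e₁` over `ℝ`, and being discrete it is a rank-two lattice
in `ℂ e₁ ≅ ℂ`. A diagonal element of `H` with first entry `ζ` multiplies this lattice by `ζ`, so
`ζ` is an eigenvalue of an integer `2 × 2` matrix, and a primitive `m`-th root of unity of degree
at most two has `m ∈ {1, 2, 3, 4, 6}`. Finally `ζᵏ - 1 ≠ 0` cannot map all of `ℂ e₁` into the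
discrete group `Λ`, which gives the exact order of the automorphism.
-/

noncomputable section

lemma eq_zero_of_forall_mul_mem {𝕜 S : Type*} [NontriviallyNormedField 𝕜] [SetLike S 𝕜]
    {s : S} [DiscreteTopology s] {c : 𝕜} (h : ∀ z, c * z ∈ s) : c = 0 := by
  by_contra hc
  have : DiscreteTopology 𝕜 :=
    .of_continuous_injective (f := fun z => (⟨c * z, h z⟩ : s)) (by fun_prop)
      fun _ _ hxy => mul_left_cancel₀ hc (congrArg Subtype.val hxy)
  exact not_isOpen_singleton (0 : 𝕜) (isOpen_discrete _)

lemma IsPrimitiveRoot.im_ne_zero {m : ℕ} (hm : 2 < m) {ζ : ℂ} (hζ : IsPrimitiveRoot ζ m) :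
    ζ.im ≠ 0 := by
  intro him
  have hsq : ζ ^ 2 = 1 := by
    have h1 : Complex.normSq ζ = 1 := by
      rw [← Complex.sq_norm, hζ.norm'_eq_one (by omega), one_pow]
    apply Complex.ext <;> simp [pow_two, him]
    simpa [Complex.normSq_apply, him] using h1
  have := Nat.le_of_dvd two_pos (hζ.dvd_of_pow_eq_one 2 hsq)
  omega

lemma IsPrimitiveRoot.mem_two_three_four_six_of_sq_eq {m : ℕ} (hm : 2 ≤ m) {ζ : ℂ}
    (hζ : IsPrimitiveRoot ζ m) {A B : ℤ} (h : ζ ^ 2 = A * ζ + B) :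
    m ∈ ({2, 3, 4, 6} : Set ℕ) := by
  rcases hm.eq_or_lt with rfl | hm3
  · simp
  have him := hζ.im_ne_zero hm3
  have hnorm : ζ.re * ζ.re + ζ.im * ζ.im = 1 := by
    rw [← Complex.normSq_apply, ← Complex.sq_norm, hζ.norm'_eq_one (by omega), one_pow]
  have hre := congrArg Complex.re h
  have him' := congrArg Complex.im h
  simp only [pow_two, Complex.mul_re, Complex.mul_im, Complex.add_re, Complex.add_im,
    Complex.intCast_re, Complex.intCast_im] at hre him'
  -- Comparing imaginary and real parts gives `A = 2 Re ζ` and `B = -|ζ|² = -1`.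
  have hA : (A : ℝ) = 2 * ζ.re := mul_right_cancel₀ him (by linarith)
  have hB : B = -1 := by
    have : (B : ℝ) = -1 := by linear_combination -hre - ζ.re * hA - hnorm
    exact_mod_cast this
  have hA1 : -1 ≤ A ∧ A ≤ 1 := by
    have : (A : ℝ) ^ 2 < 4 := by
      rw [hA]
      nlinarith [mul_self_pos.mpr him]
    have : A ^ 2 < 4 := by exact_mod_cast this
    constructor <;> nlinarith
  subst hB
  have hdvd : m ∣ 3 ∨ m ∣ 4 ∨ m ∣ 6 := by
    obtain ⟨h1, h2⟩ := hA1
    interval_cases A <;> push_cast at h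
    · exact .inl (hζ.dvd_of_pow_eq_one 3 (by linear_combination (ζ - 1) * h))
    · exact .inr (.inl (hζ.dvd_of_pow_eq_one 4 (by linear_combination (ζ ^ 2 - 1) * h)))
    · exact .inr (.inr (hζ.dvd_of_pow_eq_one 6
        (by linear_combination (ζ ^ 3 - 1) * (ζ + 1) * h)))
  have : m ≤ 6 := by rcases hdvd with h | h | h <;> linarith [Nat.le_of_dvd (by norm_num) h]
  interval_cases m <;> simp at hdvd ⊢

lemma exists_int_sq_eq_of_mul_mem_zlattice (L : Submodule ℤ ℂ) [DiscreteTopology L]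
    [IsZLattice ℝ L] {ζ : ℂ} (hL : ∀ z ∈ L, ζ * z ∈ L) :
    ∃ A B : ℤ, ζ ^ 2 = A * ζ + B := by
  have := ZLattice.module_finite ℝ L
  have := ZLattice.module_free ℝ L
  have hrank : Module.finrank ℤ L = 2 := by
    rw [ZLattice.rank ℝ L, Complex.finrank_real_complex]
  let b := Module.finBasisOfFinrankEq ℤ L hrank
  have hrepr (y : L) : (y : ℂ) = b.repr y 0 * b 0 + b.repr y 1 * b 1 := by
    have h := congrArg Subtype.val (b.sum_repr y)
    simp only [Fin.sum_univ_two, Submodule.coe_add, Submodule.coe_smul, zsmul_eq_mul] at h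
    exact h.symm
  have hu : (b 0 : ℂ) ≠ 0 := by simpa using b.ne_zero 0
  have hw : (b 1 : ℂ) ≠ 0 := by simpa using b.ne_zero 1
  have h0 := hrepr ⟨ζ * b 0, hL _ (b 0).2⟩
  have h1 := hrepr ⟨ζ * b 1, hL _ (b 1).2⟩
  set a := b.repr ⟨ζ * b 0, hL _ (b 0).2⟩ 0
  set c := b.repr ⟨ζ * b 0, hL _ (b 0).2⟩ 1
  set a' := b.repr ⟨ζ * b 1, hL _ (b 1).2⟩ 0
  set d := b.repr ⟨ζ * b 1, hL _ (b 1).2⟩ 1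
  -- `A`, `B` are the trace and minus the determinant of the matrix of `ζ • ·` in the basis `b`.
  refine ⟨a + d, c * a' - a * d, ?_⟩
  have : (ζ ^ 2 - ((a + d : ℤ) * ζ + (c * a' - a * d : ℤ))) * (b 0 * b 1) = 0 := by
    push_cast
    linear_combination ((ζ - d) * b 1) * h0 + (c * b 1) * h1
  simpa [sub_eq_zero, hu, hw] using this

section LineLattice

variable {ι : Type*} [DecidableEq ι]

/-- `Λ ∩ ℂ eᵢ`, viewed as a subgroup of `ℂ`: the lattice of the curve `Eᵢ`. -/
def lineLattice (Λ : AddSubgroup (ι → ℂ)) (i : ι) : Submodule ℤ ℂ :=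
  (Λ.comap (AddMonoidHom.single (fun _ => ℂ) i)).toIntSubmodule

variable {Λ : AddSubgroup (ι → ℂ)} {i : ι} {ζ : ℂ}

lemma mem_lineLattice {z : ℂ} : z ∈ lineLattice Λ i ↔ Pi.single i z ∈ Λ := Iff.rfl

lemma mem_span_single_one_iff {v : ι → ℂ} :
    v ∈ ℂ ∙ (Pi.single i 1 : ι → ℂ) ↔ ∃ z : ℂ, Pi.single i z = v := by
  simp [Submodule.mem_span_singleton, ← Pi.single_smul']

lemma inter_span_single_one_eq_image :
    (Λ : Set (ι → ℂ)) ∩ (ℂ ∙ (Pi.single i 1 : ι → ℂ) : Set (ι → ℂ)) =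
      Pi.single i '' (lineLattice Λ i) := by
  ext v
  simp only [Set.mem_inter_iff, SetLike.mem_coe, mem_span_single_one_iff, Set.mem_image,
    mem_lineLattice]
  constructor
  · rintro ⟨hv, z, rfl⟩; exact ⟨z, hv, rfl⟩
  · rintro ⟨z, hz, rfl⟩; exact ⟨hz, z, rfl⟩

instance [DiscreteTopology Λ] : DiscreteTopology (lineLattice Λ i) :=
  .of_continuous_injective (f := fun z => (⟨Pi.single i (z : ℂ), z.2⟩ : Λ))
    ((continuous_single i |>.comp continuous_subtype_val).subtype_mk _)
    fun _ _ hxy => Subtype.ext (Pi.single_injective i (congrArg Subtype.val hxy))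

lemma span_inter_span_single_one_eq (h : Submodule.span ℝ (lineLattice Λ i : Set ℂ) = ⊤) :
    Submodule.span ℝ ((Λ : Set (ι → ℂ)) ∩ (ℂ ∙ (Pi.single i 1 : ι → ℂ) : Set (ι → ℂ))) =
      (ℂ ∙ (Pi.single i 1 : ι → ℂ)).restrictScalars ℝ := by
  rw [inter_span_single_one_eq_image, ← LinearMap.coe_single ℝ (fun _ : ι => ℂ) i,
    Submodule.span_image, h, Submodule.map_top]
  ext v
  simp [mem_span_single_one_iff]

lemma span_lineLattice_eq_top {m : ℕ} (hm : m ≠ 0) {j : ι} (hij : i ≠ j)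
    (hspan : Submodule.span ℝ (Λ : Set (ι → ℂ)) = ⊤)
    (hmem : ∀ v ∈ Λ, (m : ℂ) * (v i - v j) ∈ lineLattice Λ i) :
    Submodule.span ℝ (lineLattice Λ i : Set ℂ) = ⊤ := by
  let φ : (ι → ℂ) →ₗ[ℝ] ℂ := ((m : ℂ) •
    (LinearMap.proj (R := ℂ) (φ := fun _ : ι => ℂ) i - LinearMap.proj j)).restrictScalars ℝ
  have hφ : Function.Surjective φ := fun z => ⟨Pi.single i (z / m), by
    simp [φ, Pi.single_eq_of_ne' hij]
    field_simp⟩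
  rw [eq_top_iff, ← LinearMap.range_eq_top.mpr hφ, LinearMap.range_eq_map, ← hspan,
    Submodule.map_span]
  exact Submodule.span_mono (by rintro _ ⟨v, hv, rfl⟩; exact hmem v hv)

lemma forall_pow_smul_sub_mem_iff [DiscreteTopology Λ] {m : ℕ} (hζ : IsPrimitiveRoot ζ m)
    (k : ℕ) :
    (∀ t : ι → ℂ, t ∈ ℂ ∙ (Pi.single i 1 : ι → ℂ) → ζ ^ k • t - t ∈ Λ) ↔ m ∣ k := by
  rw [← hζ.pow_eq_one_iff_dvd]
  constructor
  · intro h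
    have hmul (z : ℂ) : (ζ ^ k - 1) * z ∈ lineLattice Λ i := by
      have := h (Pi.single i z) (mem_span_single_one_iff.mpr ⟨z, rfl⟩)
      rwa [← Pi.single_smul', ← Pi.single_sub, smul_eq_mul, ← sub_one_mul] at this
    exact sub_eq_zero.mp (eq_zero_of_forall_mul_mem hmul)
  · intro h t _
    simp [h]

variable [Fintype ι] {p : ℕ}

lemma update_pow_mul_mem (hp : 0 < p)
    (hdiag : ∀ a : ι → ℕ, (p ∣ ∑ i, a i) → ∀ v ∈ Λ, (fun i => ζ ^ (a i) * v i) ∈ Λ)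
    {j k : ι} (hjk : j ≠ k) {v : ι → ℂ} (hv : v ∈ Λ) (hvk : v k = 0) (t : ℕ) :
    Function.update v j (ζ ^ t * v j) ∈ Λ := by
  -- `τ = diag(ζ, ζ^(p-1))` on coordinates `j, k` lies in `H`; as `v k = 0`, `τᵗ` only rescales `v j`.
  let a : ι → ℕ := t • (Pi.single j 1 + Pi.single k (p - 1))
  have hsum : ∑ l, a l = t * p := by
    simp only [a, Pi.smul_apply, Pi.add_apply, smul_eq_mul, ← Finset.mul_sum,
      Finset.sum_add_distrib, Finset.sum_pi_single', Finset.mem_univ, if_true]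
    congr 1; omega
  convert hdiag a (hsum ▸ dvd_mul_left p t) v hv using 1
  funext l
  by_cases hlj : l = j
  · subst hlj; simp [a, hjk]
  by_cases hlk : l = k
  · subst hlk; simp [hvk, hlj]
  · simp [a, hlj, hlk]

lemma mul_mem_lineLattice (hp : 0 < p)
    (hdiag : ∀ a : ι → ℕ, (p ∣ ∑ i, a i) → ∀ v ∈ Λ, (fun i => ζ ^ (a i) * v i) ∈ Λ)
    {j : ι} (hij : i ≠ j) {z : ℂ} (hz : z ∈ lineLattice Λ i) : ζ * z ∈ lineLattice Λ i := by
  have := update_pow_mul_mem hp hdiag hij (mem_lineLattice.mp hz)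
    (Pi.single_eq_of_ne' (M := fun _ => ℂ) hij z) 1
  simpa [mem_lineLattice, Pi.single, Function.update_idem] using this

/-- The map `ρ (1 - σ)` of the paper, with `σ = (i j)` and `ρ = ∑ₜ τᵗ`, sends `v` to
`m (vᵢ - vⱼ) eᵢ`. -/
lemma natCast_mul_sub_mem_lineLattice {m : ℕ} (hζ : IsPrimitiveRoot ζ m) (hm : 1 < m)
    (hp : 0 < p) (hperm : ∀ π : Equiv.Perm ι, ∀ v ∈ Λ, (fun i => v (π⁻¹ i)) ∈ Λ)
    (hdiag : ∀ a : ι → ℕ, (p ∣ ∑ i, a i) → ∀ v ∈ Λ, (fun i => ζ ^ (a i) * v i) ∈ Λ)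
    {j k : ι} (hij : i ≠ j) (hik : i ≠ k) (hjk : j ≠ k) {v : ι → ℂ} (hv : v ∈ Λ) :
    (m : ℂ) * (v i - v j) ∈ lineLattice Λ i := by
  set w : ι → ℂ := v - fun l => v (Equiv.swap i j l)
  have hw : w ∈ Λ := by
    simpa [Equiv.swap_inv] using Λ.sub_mem hv (hperm (Equiv.swap i j) v hv)
  have hwk : w k = 0 := by simp [w, Equiv.swap_apply_of_ne_of_ne hik.symm hjk.symm]
  have hsum : ∑ t ∈ Finset.range m, Function.update w j (ζ ^ t * w j) =
      Pi.single i ((m : ℂ) * (v i - v j)) := by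
    funext l
    rw [Finset.sum_apply]
    by_cases hlj : l = j
    · subst hlj
      simp [← Finset.sum_mul, hζ.geom_sum_eq_zero hm, Pi.single_eq_of_ne' hij]
    by_cases hli : l = i
    · subst hli; simp [w, hlj, mul_sub]
    · simp [w, hlj, hli, Equiv.swap_apply_of_ne_of_ne hli hlj]
  rw [mem_lineLattice, ← hsum]
  exact Λ.sum_mem fun t _ => update_pow_mul_mem hp hdiag hjk hw hwk t

end LineLattice

/-- Let `G = G(m,p,n)` with `m ≥ 2`, `n ≥ 3` act on an abelian variety
`A = ℂ^n ⧸ Λ` of dimension `n` with its (irreducible) standard imprimitive reflection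
representation, i.e. `Λ` is stable under coordinate permutations and under the diagonal
elements `(ζ^{a₁}, …, ζ^{aₙ})` with `p ∣ Σ aᵢ`, where `ζ` is a primitive `m`-th root of
unity.  Let `E₁ ⊆ A` be the image of the coordinate line `ℂe₁`.  Then:
(1) `E₁` is an elliptic curve, i.e. `Λ ∩ ℂe₁` is a lattice in `ℂe₁`;
(2) the element `(ζ, ζ⁻¹, 1, …, 1) ∈ H` preserves `E₁`, acting on it by multiplication
by `ζ` (in particular `Λ ∩ ℂe₁` is `ζ`-stable);
(3) this automorphism of `E₁` has order exactly `m`: multiplication by `ζ^k` induces the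
identity on `E₁` iff `m ∣ k`; hence `m ∈ {2, 3, 4, 6}`. -/
theorem coordinate_line_gives_elliptic_curve {n m p : ℕ} (hm : 2 ≤ m) (hn : 3 ≤ n)
    (hp1 : 1 ≤ p)
    (ζ : ℂ) (hζ : IsPrimitiveRoot ζ m)
    (Λ : AddSubgroup (Vn n)) (hdisc : DiscreteTopology Λ)
    (hspan : Submodule.span ℝ (Λ : Set (Vn n)) = ⊤)
    (hperm : ∀ π : Equiv.Perm (Fin n), ∀ v ∈ Λ, (fun i => v (π⁻¹ i)) ∈ Λ)
    (hdiag : ∀ a : Fin n → ℕ, (p ∣ ∑ i, a i) → ∀ v ∈ Λ, (fun i => ζ ^ (a i) * v i) ∈ Λ) :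
    let e1 : Vn n := Pi.single (⟨0, by omega⟩ : Fin n) (1 : ℂ)
    (Submodule.span ℝ ((Λ : Set (Vn n)) ∩
        ((ℂ ∙ e1) : Set (Vn n))) =
      (ℂ ∙ e1).restrictScalars ℝ) ∧
    (∀ v ∈ Λ, v ∈ (ℂ ∙ e1) → ζ • v ∈ Λ) ∧
    (∀ k : ℕ,
      ((∀ t : Vn n, t ∈ (ℂ ∙ e1) → ζ ^ k • t - t ∈ Λ) ↔
        m ∣ k)) ∧
    m ∈ ({2, 3, 4, 6} : Set ℕ) := by
  intro e1
  let i₀ : Fin n := ⟨0, by omega⟩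
  let i₁ : Fin n := ⟨1, by omega⟩
  let i₂ : Fin n := ⟨2, by omega⟩
  have h01 : i₀ ≠ i₁ := by simp [i₀, i₁, Fin.ext_iff]
  have h02 : i₀ ≠ i₂ := by simp [i₀, i₂, Fin.ext_iff]
  have h12 : i₁ ≠ i₂ := by simp [i₁, i₂, Fin.ext_iff]
  have hζL (z : ℂ) (hz : z ∈ lineLattice Λ i₀) : ζ * z ∈ lineLattice Λ i₀ :=
    mul_mem_lineLattice hp1 hdiag h01 hz
  have hspanL : Submodule.span ℝ (lineLattice Λ i₀ : Set ℂ) = ⊤ :=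
    span_lineLattice_eq_top (by omega) h01 hspan fun _ hv =>
      natCast_mul_sub_mem_lineLattice hζ (by omega) hp1 hperm hdiag h01 h02 h12 hv
  refine ⟨span_inter_span_single_one_eq hspanL, ?_, forall_pow_smul_sub_mem_iff hζ, ?_⟩
  · rintro _ hv hv₁
    obtain ⟨z, rfl⟩ := mem_span_single_one_iff.mp hv₁
    rw [← Pi.single_smul']
    exact hζL z hv
  · have : IsZLattice ℝ (lineLattice Λ i₀) := ⟨hspanL⟩
    obtain ⟨A, B, h⟩ := exists_int_sq_eq_of_mul_mem_zlattice (lineLattice Λ i₀) hζL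
    exact hζ.mem_two_three_four_six_of_sq_eq hm h
end
end
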